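/- arXiv:1602.05560 — 7 statements merged into one kernel-verified Lean document; each statement's English description precedes it below -/
import Mathlib

section
/- Let, for each n, Z be a random element of a finite set 𝒵_n, L : 𝒵_n → ℝ a score function, 𝓡 a random transformation of 𝒵_n (a Markov kernel applied independently of Z), and 𝔲 : 𝒵_n → ℤ, 𝔳 : 𝒵_n → ℤ^d, with U := 𝔲(Z), V := 𝔳(Z), and P_{(u,v)} the conditional law of Z given U=u, V=v. Assume: (A1) there exist a universal constant ε_o > 0 and a sequence Δ_n → 0 such that P( E[L(𝓡(Z)) − L(Z) | Z] ≥ ε_o ) ≥ 1 − Δ_n; (A2) there is a universal constant A < ∞ such that L(𝓡(Z)) − L(Z) ≥ −A almost surely; (A3) there exist sets 𝒱_n contained in the support of V and, for each v ∈ 𝒱_n, a discrete interval 𝒰_n(v) = {u_n(v)+1, …, u_n(v)+m_n(v)} contained in the fiber {u : P(U=u, V=v) > 0}, such that for every v ∈ 𝒱_n and u ∈ 𝒰_n(v), if Z ∼ P_{(u,v)} then 𝓡(Z) ∼ P_{(u+1,v)}; (A4) there exist n₁ and a constant c > 0 (independent of n and v) such that for every n ≥ n₁ and v ∈ 𝒱_n,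 m_n(v) ≥ c·φ_v(n)^{−1}, where φ_v(n) > 0 satisfies min_{u ∈ 𝒰_n(v)} P(U=u | V=v) ≥ φ_v(n). Suppose moreover that φ(n) := sup_{v ∈ 𝒱_n} φ_v(n) → 0 as n → ∞ and that there exists b_o > 0 with P(V ∈ 𝒱_n) ≥ b_o for all n large enough. Then for every convex nondecreasing function Φ : ℝ⁺ → ℝ⁺, every sequence of reals μ_n, and every constant c_o ∈ (0, b_o c/8), for all sufficiently large n: E Φ(|L(Z) − μ_n|) ≥ Φ( ε_o c / (16 φ(n)) ) · c_o. -/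
/-!
For fixed `v ∈ 𝒱_n`, (A3) turns the conditional means `a_u = E[L(Z) | U = u, V = v]` along the
interval `𝒰_n(v)` into a walk, `a_{u+1} = a_u + E[drift | U = u, V = v]`, whose steps are
`≥ -A` by (A2). Call a step bad when its conditional drift is below `ε / 2`: by a reverse Markov
inequality the fibre of a bad step puts a fixed proportion of its mass on `{drift < ε}`, so on
the values `v` where this event is rare (all of `𝒱_n` up to mass `O(Δ_n)`) at most `m_n(v) / 8`
steps are bad. A walk with steps `≥ -A` gaining `ε / 2` at good steps stays in the band
`|a_u - μ_n| < T` for at most `4T / ε + O(#bad)` steps; with `T = ε c / (16 φ(n))` at least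
`m_n(v) / 2` of the fibres, each of probability `≥ φ_v(n) P(V = v)`, have `|a_u - μ_n| ≥ T`.
Jensen's inequality for the convex function `x ↦ Φ |x - μ_n|` on each of these fibres, summed
over `u` and `v`, gives the bound.
-/

open Finset

noncomputable section

open Classical in
/-- Probability of an event under a pmf on a finite type. -/
def prOf {Ω : Type*} [Fintype Ω] (P : Ω → ℝ) (E : Ω → Prop) : ℝ :=
  ∑ z, if E z then P z else 0

open Classical in
/-- The conditional law `P_{(u,v)}` of `Z` given `𝔲(Z) = u` and `𝔳(Z) = v`. -/
def condUV {Ω : Type*} {d : ℕ} [Fintype Ω] (P : Ω → ℝ) (𝔲 : Ω → ℤ) (𝔳 : Ω → Fin d → ℤ)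
    (u : ℤ) (v : Fin d → ℤ) (z : Ω) : ℝ :=
  (if 𝔲 z = u ∧ 𝔳 z = v then P z else 0) / prOf P (fun w => 𝔲 w = u ∧ 𝔳 w = v)

section prOf

variable {Ω : Type*} [Fintype Ω]

theorem prOf_nonneg {w : Ω → ℝ} (hw : ∀ z, 0 ≤ w z) (E : Ω → Prop) : 0 ≤ prOf w E :=
  Finset.sum_nonneg fun z _ => by split_ifs <;> simp [hw z]

theorem prOf_add_prOf_not (w : Ω → ℝ) (E : Ω → Prop) :
    prOf w E + prOf w (fun z => ¬ E z) = ∑ z, w z := by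
  unfold prOf
  rw [← Finset.sum_add_distrib]
  exact Finset.sum_congr rfl fun z _ => by by_cases h : E z <;> simp [h]

theorem prOf_not_le_of_ge {w : Ω → ℝ} (hw : ∑ z, w z = 1) {E : Ω → Prop} {Δ : ℝ}
    (hE : prOf w E ≥ 1 - Δ) : prOf w (fun z => ¬ E z) ≤ Δ := by
  linarith [prOf_add_prOf_not w E]

theorem prOf_true (w : Ω → ℝ) : prOf w (fun _ => True) = ∑ z, w z := by
  simp [prOf]

theorem prOf_mem_eq_sum {β : Type*} (w : Ω → ℝ) (f : Ω → β) (s : Finset β) :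
    prOf w (fun z => f z ∈ s) = ∑ v ∈ s, prOf w (fun z => f z = v) := by
  classical
  unfold prOf
  rw [Finset.sum_comm]
  refine Finset.sum_congr rfl fun z _ => ?_
  simp only [eq_comm (a := f z)]
  rw [Finset.sum_ite_eq']
  congr

theorem sum_prOf_le_prOf {ι : Type*} {w : Ω → ℝ} (hw : ∀ z, 0 ≤ w z) (s : Finset ι)
    {E : ι → Ω → Prop} {F : Ω → Prop} (hEF : ∀ i ∈ s, ∀ z, E i z → F z)
    (hdisj : ∀ i ∈ s, ∀ j ∈ s, ∀ z, E i z → E j z → i = j) :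
    ∑ i ∈ s, prOf w (E i) ≤ prOf w F := by
  classical
  unfold prOf
  rw [Finset.sum_comm]
  refine Finset.sum_le_sum fun z _ => ?_
  rw [← Finset.sum_filter, Finset.sum_const, nsmul_eq_mul]
  have hcard : #(s.filter fun i => E i z) ≤ 1 :=
    Finset.card_le_one.mpr fun i hi j hj =>
      hdisj i (Finset.mem_filter.mp hi).1 j (Finset.mem_filter.mp hj).1 z
        (Finset.mem_filter.mp hi).2 (Finset.mem_filter.mp hj).2
  rcases Nat.le_one_iff_eq_zero_or_eq_one.mp hcard with h0 | h1
  · simp only [h0, Nat.cast_zero, zero_mul]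
    split_ifs <;> simp [hw z]
  · obtain ⟨i, hi⟩ := Finset.card_eq_one.mp h1
    have hi' : i ∈ s.filter fun i => E i z := hi ▸ Finset.mem_singleton_self i
    obtain ⟨his, hiE⟩ := Finset.mem_filter.mp hi'
    simp [h1, hEF i his z hiE]

/-- Reverse Markov inequality. -/
theorem mul_prOf_le_prOf_lt {w g : Ω → ℝ} (hw : ∀ z, 0 ≤ w z) {A ε : ℝ}
    (hg : ∀ z, -A ≤ g z) {E : Ω → Prop}
    (hmean : prOf (fun z => w z * g z) E ≤ ε / 2 * prOf w E) :
    ε * prOf w E ≤ 2 * (ε + A) * prOf w (fun z => E z ∧ g z < ε) := by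
  have hsplit : ε * prOf w E - (ε + A) * prOf w (fun z => E z ∧ g z < ε)
      ≤ prOf (fun z => w z * g z) E := by
    unfold prOf
    rw [Finset.mul_sum, Finset.mul_sum, ← Finset.sum_sub_distrib]
    refine Finset.sum_le_sum fun z _ => ?_
    have := hw z
    have := hg z
    by_cases hE : E z <;> by_cases hgz : g z < ε <;> simp [hE, hgz] <;> nlinarith
  linarith

end prOf

theorem sum_mul_eq_sum_mul_of_kernel {Ω : Type*} [Fintype Ω] {q q' : Ω → ℝ} {R : Ω → Ω → ℝ}
    (h : ∀ z', ∑ z, q z * R z z' = q' z') (f : Ω → ℝ) :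
    ∑ z', q' z' * f z' = ∑ z, q z * ∑ z', R z z' * f z' := by
  simp_rw [← h, Finset.sum_mul, Finset.mul_sum, mul_assoc]
  exact Finset.sum_comm

theorem ConvexOn.comp_abs_sub {Φ : ℝ → ℝ} (hconv : ConvexOn ℝ (Set.Ici 0) Φ)
    (hmono : MonotoneOn Φ (Set.Ici 0)) (μ : ℝ) :
    ConvexOn ℝ Set.univ (fun x => Φ |x - μ|) := by
  have himage : (fun x => dist x μ) '' Set.univ = Set.Ici 0 := by
    ext y
    refine ⟨fun ⟨x, _, hx⟩ => hx ▸ dist_nonneg, fun hy => ⟨y + μ, trivial, ?_⟩⟩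
    simp [abs_of_nonneg (Set.mem_Ici.mp hy)]
  have := (himage ▸ hconv).comp (convexOn_univ_dist μ) (himage ▸ hmono)
  simpa [Function.comp_def, Real.dist_eq] using this

theorem mul_card_near_le (a : ℕ → ℝ) (N : ℕ) (good : ℕ → Prop) [DecidablePred good]
    {δ A T μ : ℝ} (hδ : 0 ≤ δ) (hA : 0 ≤ A) (hT : 0 ≤ T)
    (hstep : ∀ j < N, -A ≤ a (j + 1) - a j)
    (hgood : ∀ j < N, good j → δ ≤ a (j + 1) - a j) :
    δ * #{j ∈ range N | |a j - μ| < T} ≤ 2 * T + δ + (A + δ) * #{j ∈ range N | ¬ good j} := by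
  -- Clamped to `[μ - T, μ + T + δ]`, every good step taken inside the band gains `≥ δ`.
  set f : ℝ → ℝ := fun x => max (μ - T) (min x (μ + T + δ)) with hf
  have hgain : ∀ j ∈ range N,
      (if |a j - μ| < T then δ else 0) - (if ¬ good j then A + δ else 0)
        ≤ f (a (j + 1)) - f (a j) := by
    intro j hj
    have hj := Finset.mem_range.mp hj
    have hs := hstep j hj
    by_cases hg : good j
    · have hd := hgood j hj hg
      by_cases hb : |a j - μ| < T
      · obtain ⟨hb1, hb2⟩ := abs_lt.mp hb
        simp only [hb, hg, if_true, not_true, if_false, hf, max_def, min_def]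
        split_ifs <;> linarith
      · simp only [hb, hg, if_false, not_true, hf, max_def, min_def]
        split_ifs <;> linarith
    · simp only [hg, not_false_eq_true, if_true, hf, max_def, min_def]
      split_ifs <;> linarith
  have htelescope : ∑ j ∈ range N, (f (a (j + 1)) - f (a j)) ≤ 2 * T + δ := by
    rw [Finset.sum_range_sub (fun j => f (a j))]
    have h1 : f (a N) ≤ μ + T + δ := max_le (by linarith) (min_le_right _ _)
    have h2 : μ - T ≤ f (a 0) := le_max_left _ _
    linarith
  have hcount : ∑ j ∈ range N,
      ((if |a j - μ| < T then δ else 0) - (if ¬ good j then A + δ else 0))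
        = δ * #{j ∈ range N | |a j - μ| < T} - (A + δ) * #{j ∈ range N | ¬ good j} := by
    rw [Finset.sum_sub_distrib, ← Finset.sum_filter, ← Finset.sum_filter, Finset.sum_const,
      Finset.sum_const, nsmul_eq_mul, nsmul_eq_mul, mul_comm δ, mul_comm (A + δ)]
  linarith [Finset.sum_le_sum hgain]

/-- `E[L(𝓡(z))] - L(z)`. -/
def drift {Ω : Type*} [Fintype Ω] (R : Ω → Ω → ℝ) (L : Ω → ℝ) (z : Ω) : ℝ :=
  ∑ z', R z z' * L z' - L z

theorem neg_le_drift {Ω : Type*} [Fintype Ω] {R : Ω → Ω → ℝ} {L : Ω → ℝ} {A : ℝ}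
    (hR : ∀ z z', 0 ≤ R z z') (hR1 : ∀ z, ∑ z', R z z' = 1)
    (hA : ∀ z z', 0 < R z z' → -A ≤ L z' - L z) (z : Ω) : -A ≤ drift R L z := by
  have hdrift : drift R L z = ∑ z', R z z' * (L z' - L z) := by
    simp only [drift, mul_sub, Finset.sum_sub_distrib, ← Finset.sum_mul, hR1, one_mul]
  rw [hdrift, ← mul_one (-A), ← hR1 z, Finset.mul_sum]
  refine Finset.sum_le_sum fun z' _ => ?_
  rcases (hR z z').eq_or_lt with h0 | hpos
  · simp [← h0]
  · rw [mul_comm]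
    exact mul_le_mul_of_nonneg_left (hA z z' hpos) (hR z z')

section condMean

variable {Ω : Type*} [Fintype Ω] {d : ℕ} {P : Ω → ℝ} {𝔲 : Ω → ℤ} {𝔳 : Ω → Fin d → ℤ}
  {u : ℤ} {v : Fin d → ℤ}

variable (P 𝔲 𝔳) in
/-- `E[f(Z) | U = u, V = v]`. -/
def condMean (f : Ω → ℝ) (u : ℤ) (v : Fin d → ℤ) : ℝ :=
  ∑ z, condUV P 𝔲 𝔳 u v z * f z

theorem condUV_nonneg (hP : ∀ z, 0 ≤ P z) (z : Ω) : 0 ≤ condUV P 𝔲 𝔳 u v z :=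
  div_nonneg (by split_ifs <;> simp [hP z]) (prOf_nonneg hP _)

theorem prOf_mul_condMean (h : prOf P (fun z => 𝔲 z = u ∧ 𝔳 z = v) ≠ 0) (f : Ω → ℝ) :
    prOf P (fun z => 𝔲 z = u ∧ 𝔳 z = v) * condMean P 𝔲 𝔳 f u v
      = prOf (fun z => P z * f z) (fun z => 𝔲 z = u ∧ 𝔳 z = v) := by
  rw [condMean, Finset.mul_sum]
  refine Finset.sum_congr rfl fun z _ => ?_
  rw [condUV]
  split_ifs
  · field_simp
  · simp

theorem sum_condUV (h : prOf P (fun z => 𝔲 z = u ∧ 𝔳 z = v) ≠ 0) :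
    ∑ z, condUV P 𝔲 𝔳 u v z = 1 := by
  have := prOf_mul_condMean h (fun _ => 1)
  simp only [condMean, mul_one] at this
  exact (mul_eq_left₀ h).mp this

theorem neg_le_condMean (hP : ∀ z, 0 ≤ P z) (h : prOf P (fun z => 𝔲 z = u ∧ 𝔳 z = v) ≠ 0)
    {f : Ω → ℝ} {A : ℝ} (hf : ∀ z, -A ≤ f z) : -A ≤ condMean P 𝔲 𝔳 f u v := by
  rw [condMean, ← mul_one (-A), ← sum_condUV h, Finset.mul_sum]
  refine Finset.sum_le_sum fun z _ => ?_
  rw [mul_comm]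
  exact mul_le_mul_of_nonneg_left (hf z) (condUV_nonneg hP z)

theorem condMean_succ {R : Ω → Ω → ℝ}
    (hR : ∀ z', ∑ z, condUV P 𝔲 𝔳 u v z * R z z' = condUV P 𝔲 𝔳 (u + 1) v z') (L : Ω → ℝ) :
    condMean P 𝔲 𝔳 L (u + 1) v = condMean P 𝔲 𝔳 L u v + condMean P 𝔲 𝔳 (drift R L) u v := by
  rw [condMean, sum_mul_eq_sum_mul_of_kernel hR, condMean, condMean, ← Finset.sum_add_distrib]
  exact Finset.sum_congr rfl fun z _ => by rw [drift]; ring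

theorem Phi_abs_condMean_sub_le (hP : ∀ z, 0 ≤ P z)
    (h : prOf P (fun z => 𝔲 z = u ∧ 𝔳 z = v) ≠ 0) {Φ : ℝ → ℝ}
    (hconv : ConvexOn ℝ (Set.Ici 0) Φ) (hmono : MonotoneOn Φ (Set.Ici 0)) (L : Ω → ℝ) (μ : ℝ) :
    Φ |condMean P 𝔲 𝔳 L u v - μ| ≤ condMean P 𝔲 𝔳 (fun z => Φ |L z - μ|) u v := by
  simpa only [condMean, smul_eq_mul] using (hconv.comp_abs_sub hmono μ).map_sum_le
    (fun z _ => condUV_nonneg hP z) (sum_condUV h) (fun _ _ => Set.mem_univ (L _))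

theorem mul_prOf_le_of_condMean_le (hP : ∀ z, 0 ≤ P z)
    (h : 0 < prOf P (fun z => 𝔲 z = u ∧ 𝔳 z = v)) {g : Ω → ℝ} {A ε : ℝ} (hg : ∀ z, -A ≤ g z)
    (hmean : condMean P 𝔲 𝔳 g u v ≤ ε / 2) :
    ε * prOf P (fun z => 𝔲 z = u ∧ 𝔳 z = v)
      ≤ 2 * (ε + A) * prOf P (fun z => (𝔲 z = u ∧ 𝔳 z = v) ∧ g z < ε) := by
  refine mul_prOf_le_prOf_lt hP hg ?_
  rw [← prOf_mul_condMean h.ne', mul_comm]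
  exact mul_le_mul_of_nonneg_right hmean h.le

end condMean

theorem Int.lt_and_le_of_lt_toNat {un m : ℤ} {j : ℕ} (hj : j < m.toNat) :
    un < un + 1 + j ∧ un + 1 + j ≤ un + m := by
  omega

section Interval

variable {Ω : Type*} [Fintype Ω] {d : ℕ} {P : Ω → ℝ} {𝔲 : Ω → ℤ} {𝔳 : Ω → Fin d → ℤ}
  {v : Fin d → ℤ} {un m : ℤ} {φ : ℝ}

theorem card_condMean_lt_mul_le (hP : ∀ z, 0 ≤ P z) {ε A : ℝ} (hε : 0 ≤ ε) (hεA : 0 ≤ ε + A)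
    {g : Ω → ℝ} (hg : ∀ z, -A ≤ g z)
    (hfiber : ∀ u, un < u → u ≤ un + m → 0 < prOf P (fun z => 𝔲 z = u ∧ 𝔳 z = v))
    (hφmin : ∀ u, un < u → u ≤ un + m →
      prOf P (fun z => 𝔲 z = u ∧ 𝔳 z = v) / prOf P (fun z => 𝔳 z = v) ≥ φ)
    (hpv : 0 < prOf P (fun z => 𝔳 z = v)) :
    (#{j ∈ range m.toNat | condMean P 𝔲 𝔳 g (un + 1 + (j : ℕ)) v < ε / 2} : ℝ)
        * (ε * (φ * prOf P (fun z => 𝔳 z = v)))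
      ≤ 2 * (ε + A) * prOf P (fun z => g z < ε ∧ 𝔳 z = v) := by
  set bad := {j ∈ range m.toNat | condMean P 𝔲 𝔳 g (un + 1 + (j : ℕ)) v < ε / 2}
  have hbad : ∀ j ∈ bad, ε * (φ * prOf P (fun z => 𝔳 z = v))
      ≤ 2 * (ε + A) * prOf P (fun z => (𝔲 z = un + 1 + j ∧ 𝔳 z = v) ∧ g z < ε) := by
    intro j hj
    obtain ⟨hjM, hjbad⟩ := Finset.mem_filter.mp hj
    obtain ⟨h1, h2⟩ := Int.lt_and_le_of_lt_toNat (un := un) (Finset.mem_range.mp hjM)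
    calc ε * (φ * prOf P (fun z => 𝔳 z = v))
        ≤ ε * prOf P (fun z => 𝔲 z = un + 1 + j ∧ 𝔳 z = v) :=
          mul_le_mul_of_nonneg_left ((le_div_iff₀ hpv).mp (hφmin _ h1 h2)) hε
      _ ≤ _ := mul_prOf_le_of_condMean_le hP (hfiber _ h1 h2) hg hjbad.le
  calc (#bad : ℝ) * (ε * (φ * prOf P (fun z => 𝔳 z = v)))
      = ∑ j ∈ bad, ε * (φ * prOf P (fun z => 𝔳 z = v)) := by
        rw [Finset.sum_const, nsmul_eq_mul]
    _ ≤ ∑ j ∈ bad, 2 * (ε + A) * prOf P (fun z => (𝔲 z = un + 1 + j ∧ 𝔳 z = v) ∧ g z < ε) :=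
        Finset.sum_le_sum hbad
    _ ≤ 2 * (ε + A) * prOf P (fun z => g z < ε ∧ 𝔳 z = v) := by
        rw [← Finset.mul_sum]
        refine mul_le_mul_of_nonneg_left (sum_prOf_le_prOf hP bad
          (fun _ _ _ hz => ⟨hz.2, hz.1.2⟩) fun i _ j _ z hi hj => ?_) (by linarith)
        have := hi.1.1.symm.trans hj.1.1
        omega

theorem Phi_mul_card_mul_le (hP : ∀ z, 0 ≤ P z)
    (hfiber : ∀ u, un < u → u ≤ un + m → 0 < prOf P (fun z => 𝔲 z = u ∧ 𝔳 z = v))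
    (hφmin : ∀ u, un < u → u ≤ un + m →
      prOf P (fun z => 𝔲 z = u ∧ 𝔳 z = v) / prOf P (fun z => 𝔳 z = v) ≥ φ)
    (hpv : 0 < prOf P (fun z => 𝔳 z = v)) {Φ : ℝ → ℝ} (hconv : ConvexOn ℝ (Set.Ici 0) Φ)
    (hmono : MonotoneOn Φ (Set.Ici 0)) (hnn : ∀ x : ℝ, 0 ≤ x → 0 ≤ Φ x) {T : ℝ} (hT : 0 ≤ T)
    (L : Ω → ℝ) (μ : ℝ) :
    Φ T * ((#{j ∈ range m.toNat | ¬ |condMean P 𝔲 𝔳 L (un + 1 + (j : ℕ)) v - μ| < T} : ℝ)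
        * (φ * prOf P (fun z => 𝔳 z = v)))
      ≤ prOf (fun z => P z * Φ |L z - μ|) (fun z => 𝔳 z = v) := by
  set far := {j ∈ range m.toNat | ¬ |condMean P 𝔲 𝔳 L (un + 1 + (j : ℕ)) v - μ| < T}
  have hfar : ∀ j ∈ far, Φ T * (φ * prOf P (fun z => 𝔳 z = v))
      ≤ prOf (fun z => P z * Φ |L z - μ|) (fun z => 𝔲 z = un + 1 + j ∧ 𝔳 z = v) := by
    intro j hj
    obtain ⟨hjM, hjfar⟩ := Finset.mem_filter.mp hj
    obtain ⟨h1, h2⟩ := Int.lt_and_le_of_lt_toNat (un := un) (Finset.mem_range.mp hjM)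
    have hpos := hfiber _ h1 h2
    calc Φ T * (φ * prOf P (fun z => 𝔳 z = v))
        ≤ Φ T * prOf P (fun z => 𝔲 z = un + 1 + j ∧ 𝔳 z = v) :=
          mul_le_mul_of_nonneg_left ((le_div_iff₀ hpv).mp (hφmin _ h1 h2)) (hnn T hT)
      _ ≤ Φ |condMean P 𝔲 𝔳 L (un + 1 + (j : ℕ)) v - μ|
            * prOf P (fun z => 𝔲 z = un + 1 + j ∧ 𝔳 z = v) :=
          mul_le_mul_of_nonneg_right
            (hmono hT (Set.mem_Ici.mpr (abs_nonneg _)) (not_lt.mp hjfar)) hpos.le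
      _ ≤ condMean P 𝔲 𝔳 (fun z => Φ |L z - μ|) (un + 1 + (j : ℕ)) v
            * prOf P (fun z => 𝔲 z = un + 1 + j ∧ 𝔳 z = v) :=
          mul_le_mul_of_nonneg_right (Phi_abs_condMean_sub_le hP hpos.ne' hconv hmono L μ)
            hpos.le
      _ = _ := by rw [mul_comm, prOf_mul_condMean hpos.ne']
  calc Φ T * ((#far : ℝ) * (φ * prOf P (fun z => 𝔳 z = v)))
      = ∑ j ∈ far, Φ T * (φ * prOf P (fun z => 𝔳 z = v)) := by
        rw [Finset.sum_const, nsmul_eq_mul]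
        ring
    _ ≤ ∑ j ∈ far, prOf (fun z => P z * Φ |L z - μ|) (fun z => 𝔲 z = un + 1 + j ∧ 𝔳 z = v) :=
        Finset.sum_le_sum hfar
    _ ≤ _ := sum_prOf_le_prOf (fun z => mul_nonneg (hP z) (hnn _ (abs_nonneg _))) far
        (fun _ _ _ hz => hz.2) fun i _ j _ z hi hj => by
          have := hi.1.symm.trans hj.1
          omega

theorem mul_card_condMean_near_le (hP : ∀ z, 0 ≤ P z) {ε A : ℝ} (hε : 0 ≤ ε) (hA : 0 ≤ A)
    {R : Ω → Ω → ℝ} {L : Ω → ℝ} (hdrift : ∀ z, -A ≤ drift R L z)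
    (hfiber : ∀ u, un < u → u ≤ un + m → 0 < prOf P (fun z => 𝔲 z = u ∧ 𝔳 z = v))
    (hker : ∀ u, un < u → u ≤ un + m →
      ∀ z', ∑ z, condUV P 𝔲 𝔳 u v z * R z z' = condUV P 𝔲 𝔳 (u + 1) v z')
    {T : ℝ} (hT : 0 ≤ T) (μ : ℝ) :
    ε / 2 * #{j ∈ range m.toNat | |condMean P 𝔲 𝔳 L (un + 1 + (j : ℕ)) v - μ| < T}
      ≤ 2 * T + ε / 2 + (A + ε / 2)
        * #{j ∈ range m.toNat | condMean P 𝔲 𝔳 (drift R L) (un + 1 + (j : ℕ)) v < ε / 2} := by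
  have hstep : ∀ j < m.toNat,
      condMean P 𝔲 𝔳 L (un + 1 + ((j + 1 : ℕ) : ℤ)) v - condMean P 𝔲 𝔳 L (un + 1 + (j : ℕ)) v
        = condMean P 𝔲 𝔳 (drift R L) (un + 1 + (j : ℕ)) v := by
    intro j hj
    obtain ⟨h1, h2⟩ := Int.lt_and_le_of_lt_toNat (un := un) hj
    have hu : un + 1 + ((j + 1 : ℕ) : ℤ) = un + 1 + j + 1 := by push_cast; ring
    rw [hu, condMean_succ (hker _ h1 h2), add_sub_cancel_left]
  simpa only [not_le] using mul_card_near_le (fun j => condMean P 𝔲 𝔳 L (un + 1 + (j : ℕ)) v)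
    m.toNat (fun j => ε / 2 ≤ condMean P 𝔲 𝔳 (drift R L) (un + 1 + (j : ℕ)) v) (μ := μ)
    (by positivity) hA hT
    (fun j hj => by
      obtain ⟨h1, h2⟩ := Int.lt_and_le_of_lt_toNat (un := un) hj
      rw [hstep j hj]
      exact neg_le_condMean hP (hfiber _ h1 h2).ne' hdrift)
    (fun j hj hgood => (hstep j hj).symm ▸ hgood)

theorem half_le_card_far (hP : ∀ z, 0 ≤ P z) {ε A : ℝ} (hε : 0 < ε) (hA : 0 ≤ A)
    {R : Ω → Ω → ℝ} {L : Ω → ℝ} (hdrift : ∀ z, -A ≤ drift R L z)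
    (hfiber : ∀ u, un < u → u ≤ un + m → 0 < prOf P (fun z => 𝔲 z = u ∧ 𝔳 z = v))
    (hker : ∀ u, un < u → u ≤ un + m →
      ∀ z', ∑ z, condUV P 𝔲 𝔳 u v z * R z z' = condUV P 𝔲 𝔳 (u + 1) v z')
    (hφ : 0 < φ)
    (hφmin : ∀ u, un < u → u ≤ un + m →
      prOf P (fun z => 𝔲 z = u ∧ 𝔳 z = v) / prOf P (fun z => 𝔳 z = v) ≥ φ)
    (hpv : 0 < prOf P (fun z => 𝔳 z = v)) {c φmax : ℝ} (hm : (m : ℝ) ≥ c / φ)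
    (hφmax : φ ≤ φmax) (hφmax_le : 8 * φmax ≤ c)
    (hgood : 16 * (ε + A) * (ε + 2 * A) * prOf P (fun z => drift R L z < ε ∧ 𝔳 z = v)
      ≤ ε ^ 2 * c * prOf P (fun z => 𝔳 z = v)) (μ : ℝ) :
    (m : ℝ) / 2 ≤ #{j ∈ range m.toNat |
      ¬ |condMean P 𝔲 𝔳 L (un + 1 + (j : ℕ)) v - μ| < ε * c / (16 * φmax)} := by
  set T := ε * c / (16 * φmax)
  have hφmax0 : 0 < φmax := hφ.trans_le hφmax
  have hc : 0 < c := by linarith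
  have hM : (m.toNat : ℝ) = m := by
    have hm0 : 0 ≤ m := by exact_mod_cast (div_pos hc hφ).le.trans hm
    exact_mod_cast Int.toNat_of_nonneg hm0
  have hsplit := Finset.card_filter_add_card_filter_not (s := range m.toNat)
    (fun j => |condMean P 𝔲 𝔳 L (un + 1 + (j : ℕ)) v - μ| < T)
  rw [Finset.card_range, ← Nat.cast_inj (R := ℝ), hM, Nat.cast_add] at hsplit
  have hwalk := mul_card_condMean_near_le hP hε.le hA hdrift hfiber hker (by positivity : 0 ≤ T) μ
  have hbad := card_condMean_lt_mul_le hP hε.le (by linarith) hdrift hfiber hφmin hpv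
  set k := ((#{j ∈ range m.toNat | |condMean P 𝔲 𝔳 L (un + 1 + (j : ℕ)) v - μ| < T} : ℕ) : ℝ)
  set b := ((#{j ∈ range m.toNat |
    condMean P 𝔲 𝔳 (drift R L) (un + 1 + (j : ℕ)) v < ε / 2} : ℕ) : ℝ)
  have hbφ : b * φ * (8 * (ε + 2 * A)) ≤ ε * c := by
    refine le_of_mul_le_mul_left ?_ (by positivity : 0 < ε * prOf P (fun z => 𝔳 z = v))
    nlinarith [mul_le_mul_of_nonneg_right hbad (by positivity : (0 : ℝ) ≤ 8 * (ε + 2 * A))]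
  have hTφ : T * φ ≤ ε * c / 16 := by
    calc T * φ ≤ T * φmax := mul_le_mul_of_nonneg_left hφmax (by positivity)
      _ = ε * c / 16 := by simp only [T]; field_simp
  have hk : k ≤ m / 2 := by
    refine le_of_mul_le_mul_left ?_ (by positivity : 0 < ε * φ)
    nlinarith [mul_le_mul_of_nonneg_right hwalk (by positivity : (0 : ℝ) ≤ 2 * φ),
      (div_le_iff₀ hφ).mp hm]
  linarith

theorem Phi_mul_prOf_le_of_good (hP : ∀ z, 0 ≤ P z) {ε A : ℝ} (hε : 0 < ε) (hA : 0 ≤ A)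
    {R : Ω → Ω → ℝ} {L : Ω → ℝ} (hdrift : ∀ z, -A ≤ drift R L z)
    (hfiber : ∀ u, un < u → u ≤ un + m → 0 < prOf P (fun z => 𝔲 z = u ∧ 𝔳 z = v))
    (hker : ∀ u, un < u → u ≤ un + m →
      ∀ z', ∑ z, condUV P 𝔲 𝔳 u v z * R z z' = condUV P 𝔲 𝔳 (u + 1) v z')
    (hφ : 0 < φ)
    (hφmin : ∀ u, un < u → u ≤ un + m →
      prOf P (fun z => 𝔲 z = u ∧ 𝔳 z = v) / prOf P (fun z => 𝔳 z = v) ≥ φ)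
    (hpv : 0 < prOf P (fun z => 𝔳 z = v)) {c φmax : ℝ} (hm : (m : ℝ) ≥ c / φ)
    (hφmax : φ ≤ φmax) (hφmax_le : 8 * φmax ≤ c)
    (hgood : 16 * (ε + A) * (ε + 2 * A) * prOf P (fun z => drift R L z < ε ∧ 𝔳 z = v)
      ≤ ε ^ 2 * c * prOf P (fun z => 𝔳 z = v))
    {Φ : ℝ → ℝ} (hconv : ConvexOn ℝ (Set.Ici 0) Φ) (hmono : MonotoneOn Φ (Set.Ici 0))
    (hnn : ∀ x : ℝ, 0 ≤ x → 0 ≤ Φ x) (μ : ℝ) :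
    Φ (ε * c / (16 * φmax)) * (c / 2 * prOf P (fun z => 𝔳 z = v))
      ≤ prOf (fun z => P z * Φ |L z - μ|) (fun z => 𝔳 z = v) := by
  have hT : 0 ≤ ε * c / (16 * φmax) := by
    have hφmax0 := hφ.trans_le hφmax
    have hc : 0 < c := by linarith
    positivity
  have hfar := half_le_card_far hP hε hA hdrift hfiber hker hφ hφmin hpv hm hφmax hφmax_le
    hgood μ
  refine le_trans (mul_le_mul_of_nonneg_left ?_ (hnn _ hT))
    (Phi_mul_card_mul_le hP hfiber hφmin hpv hconv hmono hnn hT L μ)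
  have hmφ : c ≤ m * φ := (div_le_iff₀ hφ).mp hm
  calc c / 2 * prOf P (fun z => 𝔳 z = v) ≤ (m / 2 * φ) * prOf P (fun z => 𝔳 z = v) := by
        gcongr
        linarith
    _ ≤ _ := by
        rw [← mul_assoc]
        gcongr

end Interval

theorem prOf_mem_sub_div_le_sum_filter {Ω β : Type*} [Fintype Ω] {w : Ω → ℝ}
    (hw : ∀ z, 0 ≤ w z) (f : Ω → β) (s : Finset β) (B : Ω → Prop) {η : ℝ} (hη : 0 < η) :
    prOf w (fun z => f z ∈ s) - prOf w B / η
      ≤ ∑ v ∈ s with prOf w (fun z => B z ∧ f z = v) ≤ η * prOf w (fun z => f z = v),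
          prOf w (fun z => f z = v) := by
  have hbad : ∑ v ∈ s with ¬ prOf w (fun z => B z ∧ f z = v) ≤ η * prOf w (fun z => f z = v),
      prOf w (fun z => f z = v) ≤ prOf w B / η := by
    calc _ ≤ ∑ v ∈ s with ¬ prOf w (fun z => B z ∧ f z = v) ≤ η * prOf w (fun z => f z = v),
          prOf w (fun z => B z ∧ f z = v) / η :=
          Finset.sum_le_sum fun v hv =>
            (le_div_iff₀' hη).mpr (not_le.mp (Finset.mem_filter.mp hv).2).le
      _ ≤ prOf w B / η := by
          rw [← Finset.sum_div]
          exact div_le_div_of_nonneg_right (sum_prOf_le_prOf hw _ (fun _ _ _ hz => hz.1)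
            fun _ _ _ _ _ hi hj => hi.2.symm.trans hj.2) hη.le
  rw [prOf_mem_eq_sum, ← Finset.sum_filter_add_sum_filter_not s
    (fun v => prOf w (fun z => B z ∧ f z = v) ≤ η * prOf w (fun z => f z = v))]
  linarith

theorem Phi_mul_le_sum_mul_Phi {Ω : Type*} [Fintype Ω] {d : ℕ} {P : Ω → ℝ} {𝔲 : Ω → ℤ}
    {𝔳 : Ω → Fin d → ℤ} {R : Ω → Ω → ℝ} {L : Ω → ℝ} (hP : ∀ z, 0 ≤ P z) {ε A Δ : ℝ}
    (hε : 0 < ε) (hA : 0 ≤ A) (hdrift : ∀ z, -A ≤ drift R L z)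
    (hΔ : prOf P (fun z => drift R L z < ε) ≤ Δ) {𝒱 : Finset (Fin d → ℤ)}
    (hsupp : ∀ v ∈ 𝒱, 0 < prOf P (fun z => 𝔳 z = v)) {un mn : (Fin d → ℤ) → ℤ}
    (hfiber : ∀ v ∈ 𝒱, ∀ u : ℤ, un v < u → u ≤ un v + mn v →
      0 < prOf P (fun z => 𝔲 z = u ∧ 𝔳 z = v))
    (hker : ∀ v ∈ 𝒱, ∀ u : ℤ, un v < u → u ≤ un v + mn v →
      ∀ z', ∑ z, condUV P 𝔲 𝔳 u v z * R z z' = condUV P 𝔲 𝔳 (u + 1) v z')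
    {φ : (Fin d → ℤ) → ℝ} (hφpos : ∀ v ∈ 𝒱, 0 < φ v)
    (hφmin : ∀ v ∈ 𝒱, ∀ u : ℤ, un v < u → u ≤ un v + mn v →
      prOf P (fun z => 𝔲 z = u ∧ 𝔳 z = v) / prOf P (fun z => 𝔳 z = v) ≥ φ v)
    {c φmax : ℝ} (hc : 0 < c) (hm : ∀ v ∈ 𝒱, (mn v : ℝ) ≥ c / φ v)
    (hφmax : ∀ v ∈ 𝒱, φ v ≤ φmax) (hφmax0 : 0 ≤ φmax) (hφmax_le : 8 * φmax ≤ c)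
    {Φ : ℝ → ℝ} (hconv : ConvexOn ℝ (Set.Ici 0) Φ) (hmono : MonotoneOn Φ (Set.Ici 0))
    (hnn : ∀ x : ℝ, 0 ≤ x → 0 ≤ Φ x) (μ : ℝ) :
    Φ (ε * c / (16 * φmax)) * (c / 2 * (prOf P (fun z => 𝔳 z ∈ 𝒱)
        - Δ / (ε ^ 2 * c / (16 * (ε + A) * (ε + 2 * A)))))
      ≤ ∑ z, P z * Φ |L z - μ| := by
  set η := ε ^ 2 * c / (16 * (ε + A) * (ε + 2 * A))
  have hη : 0 < η := by positivity
  set 𝒢 := {v ∈ 𝒱 | prOf P (fun z => drift R L z < ε ∧ 𝔳 z = v)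
    ≤ η * prOf P (fun z => 𝔳 z = v)}
  have hmass : prOf P (fun z => 𝔳 z ∈ 𝒱) - Δ / η ≤ ∑ v ∈ 𝒢, prOf P (fun z => 𝔳 z = v) :=
    le_trans (by gcongr) (prOf_mem_sub_div_le_sum_filter hP 𝔳 𝒱 _ hη)
  have hgood : ∀ v ∈ 𝒢, Φ (ε * c / (16 * φmax)) * (c / 2 * prOf P (fun z => 𝔳 z = v))
      ≤ prOf (fun z => P z * Φ |L z - μ|) (fun z => 𝔳 z = v) := by
    intro v hv
    obtain ⟨hv𝒱, hvη⟩ := Finset.mem_filter.mp hv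
    refine Phi_mul_prOf_le_of_good hP hε hA hdrift (hfiber v hv𝒱) (hker v hv𝒱) (hφpos v hv𝒱)
      (hφmin v hv𝒱) (hsupp v hv𝒱) (hm v hv𝒱) (hφmax v hv𝒱) hφmax_le ?_ hconv hmono hnn μ
    calc 16 * (ε + A) * (ε + 2 * A) * prOf P (fun z => drift R L z < ε ∧ 𝔳 z = v)
        ≤ 16 * (ε + A) * (ε + 2 * A) * (η * prOf P (fun z => 𝔳 z = v)) := by gcongr
      _ = ε ^ 2 * c * prOf P (fun z => 𝔳 z = v) := by
        simp only [η]
        field_simp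
  calc Φ (ε * c / (16 * φmax)) * (c / 2 * (prOf P (fun z => 𝔳 z ∈ 𝒱) - Δ / η))
      ≤ Φ (ε * c / (16 * φmax)) * (c / 2 * ∑ v ∈ 𝒢, prOf P (fun z => 𝔳 z = v)) := by
        gcongr
        exact hnn _ (by positivity)
    _ = ∑ v ∈ 𝒢, Φ (ε * c / (16 * φmax)) * (c / 2 * prOf P (fun z => 𝔳 z = v)) := by
        rw [Finset.mul_sum, Finset.mul_sum]
    _ ≤ ∑ v ∈ 𝒢, prOf (fun z => P z * Φ |L z - μ|) (fun z => 𝔳 z = v) :=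
        Finset.sum_le_sum hgood
    _ ≤ prOf (fun z => P z * Φ |L z - μ|) (fun _ => True) :=
        sum_prOf_le_prOf (fun z => mul_nonneg (hP z) (hnn _ (abs_nonneg _))) 𝒢
          (fun _ _ _ _ => trivial) fun _ _ _ _ _ hi hj => hi.symm.trans hj
    _ = ∑ z, P z * Φ |L z - μ| := prOf_true _

theorem general_moment_lower_bound_general
    (d : ℕ) (Ω : ℕ → Type) [∀ n, Fintype (Ω n)]
    (P : ∀ n, Ω n → ℝ)
    (hPnn : ∀ n z, 0 ≤ P n z) (hP1 : ∀ n, ∑ z, P n z = 1)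
    (L : ∀ n, Ω n → ℝ)
    (R : ∀ n, Ω n → Ω n → ℝ)
    (hRnn : ∀ n z z', 0 ≤ R n z z') (hR1 : ∀ n z, ∑ z', R n z z' = 1)
    (𝔲 : ∀ n, Ω n → ℤ) (𝔳 : ∀ n, Ω n → Fin d → ℤ)
    -- (A1)
    (ε : ℝ) (hε : 0 < ε)
    (Δ : ℕ → ℝ) (hΔ : Filter.Tendsto Δ Filter.atTop (nhds 0))
    (hA1 : ∀ n, prOf (P n) (fun z => ε ≤ (∑ z', R n z z' * L n z') - L n z) ≥ 1 - Δ n)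
    -- (A2)
    (A : ℝ)
    (hA2 : ∀ n z z', 0 < R n z z' → L n z' - L n z ≥ -A)
    -- (A3)
    (𝒱 : ∀ n, Finset (Fin d → ℤ))
    (h𝒱supp : ∀ n, ∀ v ∈ 𝒱 n, 0 < prOf (P n) (fun z => 𝔳 n z = v))
    (un mn : ∀ n : ℕ, (Fin d → ℤ) → ℤ)
    (hfiber : ∀ n, ∀ v ∈ 𝒱 n, ∀ u : ℤ, un n v < u → u ≤ un n v + mn n v →
      0 < prOf (P n) (fun z => 𝔲 n z = u ∧ 𝔳 n z = v))
    (hA3 : ∀ n, ∀ v ∈ 𝒱 n, ∀ u : ℤ, un n v < u → u ≤ un n v + mn n v →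
      ∀ z', (∑ z, condUV (P n) (𝔲 n) (𝔳 n) u v z * R n z z')
        = condUV (P n) (𝔲 n) (𝔳 n) (u + 1) v z')
    -- (A4)
    (φ : ℕ → (Fin d → ℤ) → ℝ)
    (hφpos : ∀ n, ∀ v ∈ 𝒱 n, 0 < φ n v)
    (hφmin : ∀ n, ∀ v ∈ 𝒱 n, ∀ u : ℤ, un n v < u → u ≤ un n v + mn n v →
      prOf (P n) (fun z => 𝔲 n z = u ∧ 𝔳 n z = v) / prOf (P n) (fun z => 𝔳 n z = v)
        ≥ φ n v)
    (n₁ : ℕ) (c : ℝ) (hc : 0 < c)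
    (hA4 : ∀ n, n₁ ≤ n → ∀ v ∈ 𝒱 n, (mn n v : ℝ) ≥ c / φ n v)
    -- `φ(n) = sup_{v ∈ 𝒱_n} φ_v(n) → 0`
    (hφ0 : Filter.Tendsto
      (fun n => sSup ((fun v => φ n v) '' (𝒱 n : Set (Fin d → ℤ))))
      Filter.atTop (nhds 0))
    -- `P(V ∈ 𝒱_n) ≥ b_o` for large `n`
    (bo : ℝ) (hbo : 0 < bo)
    (hbV : ∀ᶠ n in Filter.atTop, prOf (P n) (fun z => 𝔳 n z ∈ 𝒱 n) ≥ bo)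
    -- conclusion
    (Φ : ℝ → ℝ) (hΦconv : ConvexOn ℝ (Set.Ici 0) Φ)
    (hΦmono : MonotoneOn Φ (Set.Ici 0)) (hΦnn : ∀ x : ℝ, 0 ≤ x → 0 ≤ Φ x)
    (μ : ℕ → ℝ)
    (co : ℝ) (hco' : co < bo * c / 8) :
    ∀ᶠ n in Filter.atTop,
      (∑ z, P n z * Φ |L n z - μ n|)
        ≥ Φ (ε * c / (16 * sSup ((fun v => φ n v) '' (𝒱 n : Set (Fin d → ℤ))))) * co := by
  -- the walk estimate needs a nonnegative bound on the downward steps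
  set A' := max A 0
  have hdrift : ∀ n z, -A' ≤ drift (R n) (L n) z := fun n z =>
    (neg_le_neg (le_max_left A 0)).trans (neg_le_drift (hRnn n) (hR1 n) (hA2 n) z)
  have hΔ' : ∀ n, prOf (P n) (fun z => drift (R n) (L n) z < ε) ≤ Δ n := fun n => by
    simpa only [not_le, drift] using prOf_not_le_of_ge (hP1 n) (hA1 n)
  set η := ε ^ 2 * c / (16 * (ε + A') * (ε + 2 * A'))
  have hη : 0 < η := by positivity
  have hgap : 0 < bo - 2 * co / c := by
    rw [sub_pos, div_lt_iff₀ hc]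
    nlinarith
  filter_upwards [Filter.eventually_ge_atTop n₁, hbV, hΔ.eventually_lt_const (mul_pos hη hgap),
    hφ0.eventually_lt_const (by positivity : (0 : ℝ) < c / 8)] with n hn hbVn hΔn hφn
  set φmax := sSup ((fun v => φ n v) '' (𝒱 n : Set (Fin d → ℤ)))
  have hφmax : ∀ v ∈ 𝒱 n, φ n v ≤ φmax := fun v hv =>
    le_csSup ((𝒱 n).finite_toSet.image _).bddAbove ⟨v, hv, rfl⟩
  obtain ⟨v₀, hv₀⟩ : (𝒱 n).Nonempty := Finset.nonempty_of_sum_ne_zero <| by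
    rw [← prOf_mem_eq_sum (P n) (𝔳 n)]
    exact (hbo.trans_le hbVn).ne'
  have hφmax0 : 0 ≤ φmax := (hφpos n v₀ hv₀).le.trans (hφmax v₀ hv₀)
  have hmain := Phi_mul_le_sum_mul_Phi (hPnn n) hε (le_max_right A 0) (hdrift n) (hΔ' n)
    (h𝒱supp n) (hfiber n) (hA3 n) (hφpos n) (hφmin n) hc (hA4 n hn) hφmax hφmax0
    (by linarith) hΦconv hΦmono hΦnn (μ n)
  have hco_le : co ≤ c / 2 * (prOf (P n) (fun z => 𝔳 n z ∈ 𝒱 n) - Δ n / η) := by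
    have : Δ n / η < bo - 2 * co / c := (div_lt_iff₀ hη).mpr (by linarith)
    have : 2 * co / c * (c / 2) = co := by field_simp
    nlinarith
  refine le_trans ?_ hmain
  gcongr
  exact hΦnn _ (by positivity)

/-- general lower bound theorem: for each `n`, let `Z` be a random
element of a finite set `𝒵_n` with law `P n`, `L n` a score, `R n` a Markov kernel
(random transformation applied independently of `Z`), and `U = 𝔲 n (Z)`,
`V = 𝔳 n (Z)`. Assume:
(A1) there exist `ε > 0` and `Δ_n → 0` with `P(E[L(𝓡(Z)) - L(Z)|Z] ≥ ε) ≥ 1 - Δ_n`;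
(A2) `L(𝓡(Z)) - L(Z) ≥ -A` (on the support of the kernel);
(A3) there exist sets `𝒱_n` inside the support of `V` and discrete intervals
`𝒰_n(v) = {u_n(v)+1, …, u_n(v)+m_n(v)}` inside the fiber `{u : P(U = u, V = v) > 0}`
such that for `v ∈ 𝒱_n`, `u ∈ 𝒰_n(v)`: if `Z ∼ P_{(u,v)}` then `𝓡(Z) ∼ P_{(u+1,v)}`;
(A4) for `n ≥ n₁` and `v ∈ 𝒱_n`, `m_n(v) ≥ c φ_v(n)⁻¹` where `φ_v(n) > 0` is a lower
bound for `min_{u ∈ 𝒰_n(v)} P(U = u | V = v)`, with `c > 0` independent of `n, v`.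
If moreover `φ(n) := sup_{v ∈ 𝒱_n} φ_v(n) → 0` and `P(V ∈ 𝒱_n) ≥ b_o > 0` for all
large `n`, then for every convex nondecreasing `Φ : ℝ⁺ → ℝ⁺`, every sequence of reals
`μ_n` and every `c_o ∈ (0, b_o c/8)`, for all sufficiently large `n`:
`E Φ(|L(Z) - μ_n|) ≥ Φ(ε c/(16 φ(n))) c_o`. -/
theorem general_moment_lower_bound
    (d : ℕ) (Ω : ℕ → Type) [∀ n, Fintype (Ω n)]
    (P : ∀ n, Ω n → ℝ)
    (hPnn : ∀ n z, 0 ≤ P n z) (hP1 : ∀ n, ∑ z, P n z = 1)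
    (L : ∀ n, Ω n → ℝ)
    (R : ∀ n, Ω n → Ω n → ℝ)
    (hRnn : ∀ n z z', 0 ≤ R n z z') (hR1 : ∀ n z, ∑ z', R n z z' = 1)
    (𝔲 : ∀ n, Ω n → ℤ) (𝔳 : ∀ n, Ω n → Fin d → ℤ)
    -- (A1)
    (ε : ℝ) (hε : 0 < ε)
    (Δ : ℕ → ℝ) (hΔ : Filter.Tendsto Δ Filter.atTop (nhds 0))
    (hA1 : ∀ n, prOf (P n) (fun z => ε ≤ (∑ z', R n z z' * L n z') - L n z) ≥ 1 - Δ n)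
    -- (A2)
    (A : ℝ)
    (hA2 : ∀ n z z', 0 < R n z z' → L n z' - L n z ≥ -A)
    -- (A3)
    (𝒱 : ∀ n, Finset (Fin d → ℤ))
    (h𝒱supp : ∀ n, ∀ v ∈ 𝒱 n, 0 < prOf (P n) (fun z => 𝔳 n z = v))
    (un mn : ∀ n : ℕ, (Fin d → ℤ) → ℤ)
    (hfiber : ∀ n, ∀ v ∈ 𝒱 n, ∀ u : ℤ, un n v < u → u ≤ un n v + mn n v →
      0 < prOf (P n) (fun z => 𝔲 n z = u ∧ 𝔳 n z = v))
    (hA3 : ∀ n, ∀ v ∈ 𝒱 n, ∀ u : ℤ, un n v < u → u ≤ un n v + mn n v →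
      ∀ z', (∑ z, condUV (P n) (𝔲 n) (𝔳 n) u v z * R n z z')
        = condUV (P n) (𝔲 n) (𝔳 n) (u + 1) v z')
    -- (A4)
    (φ : ℕ → (Fin d → ℤ) → ℝ)
    (hφpos : ∀ n, ∀ v ∈ 𝒱 n, 0 < φ n v)
    (hφmin : ∀ n, ∀ v ∈ 𝒱 n, ∀ u : ℤ, un n v < u → u ≤ un n v + mn n v →
      prOf (P n) (fun z => 𝔲 n z = u ∧ 𝔳 n z = v) / prOf (P n) (fun z => 𝔳 n z = v)
        ≥ φ n v)
    (n₁ : ℕ) (c : ℝ) (hc : 0 < c)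
    (hA4 : ∀ n, n₁ ≤ n → ∀ v ∈ 𝒱 n, (mn n v : ℝ) ≥ c / φ n v)
    -- `φ(n) = sup_{v ∈ 𝒱_n} φ_v(n) → 0`
    (hφ0 : Filter.Tendsto
      (fun n => sSup ((fun v => φ n v) '' (𝒱 n : Set (Fin d → ℤ))))
      Filter.atTop (nhds 0))
    -- `P(V ∈ 𝒱_n) ≥ b_o` for large `n`
    (bo : ℝ) (hbo : 0 < bo)
    (hbV : ∀ᶠ n in Filter.atTop, prOf (P n) (fun z => 𝔳 n z ∈ 𝒱 n) ≥ bo)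
    -- conclusion
    (Φ : ℝ → ℝ) (hΦconv : ConvexOn ℝ (Set.Ici 0) Φ)
    (hΦmono : MonotoneOn Φ (Set.Ici 0)) (hΦnn : ∀ x : ℝ, 0 ≤ x → 0 ≤ Φ x)
    (μ : ℕ → ℝ)
    (co : ℝ) (hco : 0 < co) (hco' : co < bo * c / 8) :
    ∀ᶠ n in Filter.atTop,
      (∑ z, P n z * Φ |L n z - μ n|)
        ≥ Φ (ε * c / (16 * sSup ((fun v => φ n v) '' (𝒱 n : Set (Fin d → ℤ))))) * co :=
  general_moment_lower_bound_general d Ω P hPnn hP1 L R hRnn hR1 𝔲 𝔳 ε hε Δ hΔ hA1 A hA2 𝒱 h𝒱supp un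
    mn hfiber hA3 φ hφpos hφmin n₁ c hc hA4 hφ0 bo hbo hbV Φ hΦconv hΦmono hΦnn μ co hco'
end
end

section
/- Let X ∼ B(m,p) with p ∈ (0,1) and let β > 0. Set b(β,p) := √(2π p(1−p)) · exp(β²/(2 p(1−p))). Then for every b > b(β,p) there is m_o such that for all m > m_o and every integer i with mp − β√m ≤ i ≤ mp + β√m, one has C(m,i) p^i (1−p)^{m−i} ≥ 1/(b√m). -/
/-!
With Stirling's sequence `s(n) = n! / (√(2n) (n/e)ⁿ)`, which decreases to `√π`, and with
`m = i + j`, `x = i / m`, one has exactly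
`C(m,i) pⁱ (1-p)ʲ = s(m) / (s(i) s(j)) · √(m / (2ij)) · exp(-m·KL(x‖p))`,
where `KL` is the Kullback–Leibler divergence of Bernoulli laws. In the window
`|x - p| ≤ d = β/√m` the Stirling factor is at least `√π / c²` as soon as `s(i), s(j) ≤ c`,
`ij / m² = x(1-x) ≤ p(1-p) + d`, and, as `∂ₓ² KL(x‖p) = 1/(x(1-x))`,
`m·KL(x‖p) ≤ m d² / (2(p(1-p) - d)) = β² / (2(p(1-p) - d))`. When `m → ∞` we have `d → 0` and
`i, j → ∞`, so `c` may be taken arbitrarily close to `√π`; this yields the constant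
`√(2π p(1-p)) · exp(β² / (2p(1-p)))`.
-/

open Real Filter Topology Nat Stirling

noncomputable def bernoulliKL (x p : ℝ) : ℝ :=
  x * log (x / p) + (1 - x) * log ((1 - x) / (1 - p))

theorem bernoulliKL_self {p : ℝ} (hp0 : p ≠ 0) (hp1 : p ≠ 1) : bernoulliKL p p = 0 := by
  simp [bernoulliKL, div_self hp0, div_self (sub_ne_zero.2 hp1.symm)]

theorem bernoulliKL_one_sub (x p : ℝ) : bernoulliKL (1 - x) (1 - p) = bernoulliKL x p := by
  simp only [bernoulliKL, sub_sub_cancel]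
  ring

theorem hasDerivAt_bernoulliKL {x p : ℝ} (hx0 : x ≠ 0) (hx1 : x ≠ 1) (hp0 : p ≠ 0)
    (hp1 : p ≠ 1) :
    HasDerivAt (bernoulliKL · p) (log (x / p) - log ((1 - x) / (1 - p))) x := by
  have hx1' : 1 - x ≠ 0 := sub_ne_zero.2 hx1.symm
  have hp1' : 1 - p ≠ 0 := sub_ne_zero.2 hp1.symm
  have h₁ := (hasDerivAt_id x).mul (((hasDerivAt_id x).div_const p).log (div_ne_zero hx0 hp0))
  have h₂ := ((hasDerivAt_const x 1).sub (hasDerivAt_id x)).mul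
    ((((hasDerivAt_const x 1).sub (hasDerivAt_id x)).div_const (1 - p)).log
      (div_ne_zero hx1' hp1'))
  refine (h₁.add h₂).congr_deriv ?_
  simp only [id, Pi.sub_apply]
  field_simp
  ring

theorem log_div_sub_log_div_le {p t w : ℝ} (hp0 : 0 < p) (hpt : p ≤ t) (hw : 0 < w)
    (hwt : w ≤ p * (1 - p) - (t - p)) :
    log (t / p) - log ((1 - t) / (1 - p)) ≤ (t - p) / w := by
  have ht1 : 0 < 1 - t := by nlinarith [sq_nonneg (1 - p)]
  have hp1 : 0 < 1 - p := by linarith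
  have hlog₁ := log_le_sub_one_of_pos (div_pos (hp0.trans_le hpt) hp0)
  have hlog₂ := log_le_sub_one_of_pos (div_pos hp1 ht1)
  rw [← inv_div (1 - p), log_inv]
  have hcoef : 1 / p + 1 / (1 - t) ≤ 1 / w := by
    rw [div_add_div _ _ hp0.ne' ht1.ne', div_le_div_iff₀ (by positivity) hw]
    nlinarith
  calc log (t / p) - -log ((1 - p) / (1 - t))
      ≤ (t / p - 1) + ((1 - p) / (1 - t) - 1) := by linarith
    _ = (t - p) * (1 / p + 1 / (1 - t)) := by field_simp; ring
    _ ≤ (t - p) * (1 / w) := by gcongr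
    _ = (t - p) / w := by ring

theorem bernoulliKL_le_of_le {p x : ℝ} (hp0 : 0 < p) (hpx : p ≤ x)
    (hxv : x - p < p * (1 - p)) :
    bernoulliKL x p ≤ (x - p) ^ 2 / (2 * (p * (1 - p) - (x - p))) := by
  set w := p * (1 - p) - (x - p)
  have hw : 0 < w := sub_pos.2 hxv
  have hp1 : p < 1 := by nlinarith
  have hx1 : x < 1 := by nlinarith
  have hderiv : ∀ t ∈ Set.Icc p x,
      HasDerivAt (fun t => (t - p) ^ 2 / (2 * w) - bernoulliKL t p)
        ((t - p) / w - (log (t / p) - log ((1 - t) / (1 - p)))) t := by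
    intro t ⟨hpt, htx⟩
    refine ((((hasDerivAt_id t).sub_const p).pow 2 |>.div_const (2 * w)).sub
      (hasDerivAt_bernoulliKL (by linarith) (by linarith) hp0.ne' hp1.ne)).congr_deriv ?_
    simp only [id]
    field_simp
    ring
  have hmono := monotoneOn_of_hasDerivWithinAt_nonneg (convex_Icc p x)
    (fun t ht => (hderiv t ht).continuousAt.continuousWithinAt)
    (fun t ht => (hderiv t (interior_subset ht)).hasDerivWithinAt)
    (fun t ht => sub_nonneg.2 <| log_div_sub_log_div_le hp0 (interior_subset ht).1 hw <| by
      linarith [(interior_subset ht).2])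
    ⟨le_rfl, hpx⟩ ⟨hpx, le_rfl⟩ hpx
  simpa [bernoulliKL_self hp0.ne' hp1.ne] using hmono

theorem bernoulliKL_le {p x : ℝ} (hp0 : 0 < p) (hp1 : p < 1) (hxv : |x - p| < p * (1 - p)) :
    bernoulliKL x p ≤ (x - p) ^ 2 / (2 * (p * (1 - p) - |x - p|)) := by
  rcases le_total p x with hpx | hxp
  · rw [abs_of_nonneg (sub_nonneg.2 hpx)] at hxv ⊢
    exact bernoulliKL_le_of_le hp0 hpx hxv
  · rw [abs_of_nonpos (sub_nonpos.2 hxp)] at hxv ⊢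
    have h := bernoulliKL_le_of_le (sub_pos.2 hp1) (sub_le_sub_left hxp 1) (by linarith)
    rw [bernoulliKL_one_sub] at h
    convert h using 2 <;> ring

theorem factorial_eq_stirlingSeq_mul {n : ℕ} (hn : n ≠ 0) :
    (n ! : ℝ) = stirlingSeq n * (√(2 * n) * (n / exp 1) ^ n) := by
  rw [stirlingSeq, div_mul_cancel₀]
  positivity

theorem stirlingSeq_pos {n : ℕ} (hn : n ≠ 0) : 0 < stirlingSeq n :=
  (sqrt_pos.2 pi_pos).trans_le (sqrt_pi_le_stirlingSeq hn)

theorem add_choose_mul_pow_mul_pow_eq {i j : ℕ} (hi : i ≠ 0) (hj : j ≠ 0) (p q : ℝ) :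
    ((i + j).choose i : ℝ) * p ^ i * q ^ j =
      stirlingSeq (i + j) / (stirlingSeq i * stirlingSeq j) * √((i + j) / (2 * i * j)) *
        (((i + j) * p / i) ^ i * ((i + j) * q / j) ^ j) := by
  have hsqrt : √(2 * (i + j)) = √((i + j) / (2 * i * j)) * (√(2 * i) * √(2 * j)) := by
    rw [← sqrt_mul (by positivity), ← sqrt_mul (by positivity)]
    congr 1
    field_simp
  rw [Nat.cast_add_choose, factorial_eq_stirlingSeq_mul hi, factorial_eq_stirlingSeq_mul hj,
    factorial_eq_stirlingSeq_mul (by omega)]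
  push_cast
  rw [hsqrt]
  have := (stirlingSeq_pos hi).ne'
  have := (stirlingSeq_pos hj).ne'
  simp only [pow_add, div_pow, mul_pow]
  field_simp

theorem pow_mul_pow_eq_exp_neg_bernoulliKL {i j : ℕ} (hi : i ≠ 0) (hj : j ≠ 0) {p : ℝ}
    (hp0 : 0 < p) (hp1 : p < 1) :
    ((i + j) * p / i) ^ i * ((i + j) * (1 - p) / j) ^ j =
      exp (-((i + j) * bernoulliKL (i / (i + j)) p)) := by
  have hx : 1 - (i : ℝ) / (i + j) = j / (i + j) := by field_simp; ring
  have hlog : (i + j) * bernoulliKL (i / (i + j)) p =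
      i * log (i / ((i + j) * p)) + j * log (j / ((i + j) * (1 - p))) := by
    rw [bernoulliKL, hx, div_div, div_div]
    field_simp
  rw [hlog, neg_add, exp_add, ← mul_neg, ← mul_neg, ← log_inv, ← log_inv, inv_div, inv_div,
    exp_nat_mul, exp_nat_mul, exp_log (by positivity), exp_log (by positivity)]

theorem sqrt_pi_div_sq_le_stirlingSeq_add_div {i j : ℕ} (hi : i ≠ 0) (hj : j ≠ 0) {c : ℝ}
    (hci : stirlingSeq i ≤ c) (hcj : stirlingSeq j ≤ c) :
    √π / c ^ 2 ≤ stirlingSeq (i + j) / (stirlingSeq i * stirlingSeq j) := by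
  have hpi : √π ≤ stirlingSeq (i + j) := sqrt_pi_le_stirlingSeq (by omega)
  rw [sq]
  exact div_le_div₀ ((sqrt_nonneg _).trans hpi) hpi
    (mul_pos (stirlingSeq_pos hi) (stirlingSeq_pos hj))
    (mul_le_mul hci hcj (stirlingSeq_pos hj).le ((stirlingSeq_pos hi).le.trans hci))

theorem mul_le_sq_mul_add_of_abs_sub_le {a b p d : ℝ} (ha : 0 ≤ a) (hb : 0 ≤ b) (hp0 : 0 ≤ p)
    (hp1 : p ≤ 1) (h : |a - (a + b) * p| ≤ (a + b) * d) :
    a * b ≤ (a + b) ^ 2 * (p * (1 - p) + d) := by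
  obtain ⟨h₁, h₂⟩ := abs_le.1 h
  have hm : 0 ≤ a + b := add_nonneg ha hb
  nlinarith [mul_nonneg (neg_le_iff_add_nonneg.1 h₁) (mul_nonneg hm hp0),
    mul_nonneg (sub_nonneg.2 h₂) (mul_nonneg hm (sub_nonneg.2 hp1)), sq_nonneg (a - (a + b) * p)]

theorem le_add_choose_mul_pow_mul_pow {p d c : ℝ} (hp0 : 0 < p) (hp1 : p < 1) {i j : ℕ}
    (hi : i ≠ 0) (hj : j ≠ 0) (hci : stirlingSeq i ≤ c) (hcj : stirlingSeq j ≤ c)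
    (hdev : |(i : ℝ) - (i + j) * p| ≤ (i + j) * d) (hdv : d < p * (1 - p)) :
    √π / c ^ 2 * (√(2 * (p * (1 - p) + d)) * √(i + j))⁻¹ *
        exp (-((i + j) * d ^ 2 / (2 * (p * (1 - p) - d)))) ≤
      ((i + j).choose i : ℝ) * p ^ i * (1 - p) ^ j := by
  have hi' : (0 : ℝ) < i := by positivity
  have hj' : (0 : ℝ) < j := by positivity
  set m : ℝ := i + j
  set x : ℝ := i / m with hx_def
  have hm : 0 < m := by positivity
  have hx : |x - p| ≤ d := by
    rw [show x - p = (i - m * p) / m by rw [hx_def]; field_simp, abs_div, abs_of_pos hm,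
      div_le_iff₀ hm]
    linarith
  have hstirling := sqrt_pi_div_sq_le_stirlingSeq_add_div hi hj hci hcj
  have hsqrt : (√(2 * (p * (1 - p) + d)) * √m)⁻¹ ≤ √(m / (2 * i * j)) := by
    have hvar := mul_le_sq_mul_add_of_abs_sub_le hi'.le hj'.le hp0.le hp1.le hdev
    rw [← sqrt_mul (by nlinarith), ← sqrt_inv]
    refine sqrt_le_sqrt ?_
    rw [inv_eq_one_div, div_le_div_iff₀ (by nlinarith) (by positivity)]
    nlinarith
  have hexp : exp (-(m * d ^ 2 / (2 * (p * (1 - p) - d)))) ≤ exp (-(m * bernoulliKL x p)) := by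
    rw [exp_le_exp, neg_le_neg_iff, mul_div_assoc]
    gcongr
    refine (bernoulliKL_le hp0 hp1 (hx.trans_lt hdv)).trans
      (div_le_div₀ (by positivity) ?_ (by linarith) (by gcongr))
    rw [← sq_abs]
    gcongr
  have hs : 0 ≤ stirlingSeq (i + j) / (stirlingSeq i * stirlingSeq j) :=
    (by positivity : 0 ≤ √π / c ^ 2).trans hstirling
  rw [add_choose_mul_pow_mul_pow_eq hi hj, pow_mul_pow_eq_exp_neg_bernoulliKL hi hj hp0 hp1]
  exact mul_le_mul (mul_le_mul hstirling hsqrt (by positivity) hs) hexp (by positivity)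
    (mul_nonneg hs (sqrt_nonneg _))

theorem mul_div_sqrt (x a : ℝ) : x * (a / √x) = a * √x := by
  rw [mul_div_left_comm, div_sqrt]

theorem tendsto_div_sqrt_natCast_atTop (a : ℝ) : Tendsto (fun m : ℕ => a / √m) atTop (𝓝 0) :=
  tendsto_const_nhds.div_atTop (tendsto_sqrt_atTop.comp tendsto_natCast_atTop_atTop)

theorem tendsto_mul_sub_mul_sqrt_atTop {r : ℝ} (hr : 0 < r) (a : ℝ) :
    Tendsto (fun m : ℕ => m * r - a * √m) atTop atTop := by
  have h : Tendsto (fun m : ℕ => r - a / √m) atTop (𝓝 r) := by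
    simpa using tendsto_const_nhds.sub (tendsto_div_sqrt_natCast_atTop a)
  exact (tendsto_natCast_atTop_atTop.atTop_mul_pos hr h).congr fun m => by
    rw [mul_sub, mul_div_sqrt]

/-- `√π · binomialWindowConst p β 0` is the constant `b(β,p)` of the theorem; `t` stands for the
relative half-width `β/√m` of the window. -/
noncomputable def binomialWindowConst (p β t : ℝ) : ℝ :=
  √(2 * (p * (1 - p) + t)) * exp (β ^ 2 / (2 * (p * (1 - p) - t)))

theorem sqrt_pi_mul_binomialWindowConst_zero (p β : ℝ) :
    √π * binomialWindowConst p β 0 =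
      √(2 * π * p * (1 - p)) * exp (β ^ 2 / (2 * p * (1 - p))) := by
  rw [binomialWindowConst, ← mul_assoc, ← sqrt_mul pi_pos.le]
  ring_nf

theorem continuousAt_binomialWindowConst {p : ℝ} (hv : p * (1 - p) ≠ 0) (β : ℝ) :
    ContinuousAt (binomialWindowConst p β) 0 := by
  unfold binomialWindowConst
  fun_prop (disch := simpa using hv)

theorem one_div_mul_sqrt_le_add_choose_mul_pow_mul_pow {p β b c : ℝ} (hp0 : 0 < p)
    (hp1 : p < 1) {i j : ℕ} (hi : i ≠ 0) (hj : j ≠ 0) (hci : stirlingSeq i ≤ c)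
    (hcj : stirlingSeq j ≤ c) (hdev : |(i : ℝ) - (i + j) * p| ≤ β * √(i + j))
    (hdv : β / √(i + j) < p * (1 - p))
    (hb : c ^ 2 * binomialWindowConst p β (β / √(i + j)) ≤ √π * b) :
    1 / (b * √(i + j)) ≤ ((i + j).choose i : ℝ) * p ^ i * (1 - p) ^ j := by
  set m : ℝ := i + j
  set d := β / √m
  have hm : 0 < m := by positivity
  have hmd : m * d = β * √m := mul_div_sqrt _ _
  have hd : 0 ≤ d := nonneg_of_mul_nonneg_right (hmd ▸ (abs_nonneg _).trans hdev) hm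
  have hmd2 : m * d ^ 2 = β ^ 2 := by
    rw [sq, ← mul_assoc, hmd, mul_assoc, mul_div_cancel₀ _ (sqrt_pos.2 hm).ne', sq]
  have key := le_add_choose_mul_pow_mul_pow hp0 hp1 hi hj hci hcj (hmd.symm ▸ hdev) hdv
  rw [hmd2] at key
  have hK : 0 < c ^ 2 * binomialWindowConst p β d :=
    mul_pos (pow_pos ((stirlingSeq_pos hi).trans_le hci) 2)
      (mul_pos (sqrt_pos.2 (by nlinarith)) (exp_pos _))
  have hb0 : 0 < b := pos_of_mul_pos_right (hK.trans_le hb) (sqrt_nonneg _)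
  calc 1 / (b * √m) = √π / (√π * b * √m) := by field_simp
    _ ≤ √π / (c ^ 2 * binomialWindowConst p β d * √m) := by gcongr
    _ = _ := by rw [binomialWindowConst, exp_neg]; field_simp; rfl
    _ ≤ _ := key

theorem exists_lt_sq_mul_lt {a B A : ℝ} (h : a ^ 2 * B < A) : ∃ c, a < c ∧ c ^ 2 * B < A := by
  have hlim : Tendsto (fun c : ℝ => c ^ 2 * B) (𝓝[>] a) (𝓝 (a ^ 2 * B)) :=
    ((continuous_pow 2).mul continuous_const).continuousAt.tendsto.mono_left nhdsWithin_le_nhds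
  obtain ⟨c, hcB, hc⟩ := ((hlim.eventually_lt_const h).and self_mem_nhdsWithin).exists
  exact ⟨c, hc, hcB⟩

theorem exists_eq_add_of_abs_sub_le {m i N : ℕ} {p D : ℝ} (hi : (N : ℝ) ≤ m * p - D)
    (hj : (N : ℝ) ≤ m * (1 - p) - D) (hdev : |(i : ℝ) - m * p| ≤ D) :
    ∃ j, m = i + j ∧ N ≤ i ∧ N ≤ j := by
  obtain ⟨hlo, hhi⟩ := abs_le.1 hdev
  obtain ⟨j, rfl⟩ := Nat.exists_eq_add_of_le
    (show i ≤ m by exact_mod_cast (by linarith : (i : ℝ) ≤ m))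
  push_cast at hi hj hlo hhi
  exact ⟨j, rfl, by exact_mod_cast (by linarith : (N : ℝ) ≤ i),
    by exact_mod_cast (by linarith : (N : ℝ) ≤ j)⟩

theorem binomial_local_lower_bound_explicit_general
    (p : ℝ) (hp0 : 0 < p) (hp1 : p < 1) (β : ℝ) (b : ℝ)
    (hb : b > Real.sqrt (2 * Real.pi * p * (1 - p)) * Real.exp (β ^ 2 / (2 * p * (1 - p)))) :
    ∃ m₀ : ℕ, ∀ m : ℕ, m₀ < m →
      ∀ i : ℕ, (m : ℝ) * p - β * Real.sqrt m ≤ (i : ℝ) →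
        (i : ℝ) ≤ (m : ℝ) * p + β * Real.sqrt m →
        (m.choose i : ℝ) * p ^ i * (1 - p) ^ (m - i) ≥ 1 / (b * Real.sqrt m) := by
  have hb' : √π ^ 2 * binomialWindowConst p β 0 < √π * b := by
    rw [sq, mul_assoc, sqrt_pi_mul_binomialWindowConst_zero]
    exact mul_lt_mul_of_pos_left hb (sqrt_pos.2 pi_pos)
  obtain ⟨c, hc, hcb⟩ := exists_lt_sq_mul_lt hb'
  obtain ⟨N, hN⟩ := eventually_atTop.1 (tendsto_stirlingSeq_sqrt_pi.eventually_le_const hc)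
  have hv : 0 < p * (1 - p) := mul_pos hp0 (sub_pos.2 hp1)
  have hd := tendsto_div_sqrt_natCast_atTop β
  have hlim := ((continuousAt_binomialWindowConst hv.ne' β).tendsto.comp hd).const_mul (c ^ 2)
  obtain ⟨m₀, hm₀⟩ := eventually_atTop.1 <| (hd.eventually_lt_const hv).and <|
    ((tendsto_mul_sub_mul_sqrt_atTop hp0 β).eventually_ge_atTop (N + 1)).and <|
    ((tendsto_mul_sub_mul_sqrt_atTop (sub_pos.2 hp1) β).eventually_ge_atTop (N + 1)).and <|
    hlim.eventually_lt_const hcb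
  refine ⟨m₀, fun m hm i hlo hhi => ?_⟩
  obtain ⟨hdv, hiN, hjN, hcm⟩ := hm₀ m hm.le
  have hdev : |(i : ℝ) - m * p| ≤ β * √m := abs_le.2 ⟨by linarith, by linarith⟩
  obtain ⟨j, rfl, hi, hj⟩ := exists_eq_add_of_abs_sub_le (N := N + 1)
    (by push_cast; exact hiN) (by push_cast; exact hjN) hdev
  rw [Nat.add_sub_cancel_left, ge_iff_le]
  push_cast [Function.comp_apply] at hdev hdv hcm ⊢
  exact one_div_mul_sqrt_le_add_choose_mul_pow_mul_pow hp0 hp1 (by omega) (by omega)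
    (hN i (by omega)) (hN j (by omega)) hdev hdv hcm.le

/-- local lower bound for binomial probabilities with the explicit constant
`b(β,p) = √(2π p(1-p)) · exp(β²/(2p(1-p)))`: for every `b > b(β,p)` there is `m₀` such
that for all `m > m₀` and every integer `i` with `mp - β√m ≤ i ≤ mp + β√m`,
`C(m,i) p^i (1-p)^(m-i) ≥ 1/(b√m)`. -/
theorem binomial_local_lower_bound_explicit
    (p : ℝ) (hp0 : 0 < p) (hp1 : p < 1) (β : ℝ) (hβ : 0 < β) (b : ℝ)
    (hb : b > Real.sqrt (2 * Real.pi * p * (1 - p)) * Real.exp (β ^ 2 / (2 * p * (1 - p)))) :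
    ∃ m₀ : ℕ, ∀ m : ℕ, m₀ < m →
      ∀ i : ℕ, (m : ℝ) * p - β * Real.sqrt m ≤ (i : ℝ) →
        (i : ℝ) ≤ (m : ℝ) * p + β * Real.sqrt m →
        (m.choose i : ℝ) * p ^ i * (1 - p) ^ (m - i) ≥ 1 / (b * Real.sqrt m) :=
  binomial_local_lower_bound_explicit_general p hp0 hp1 β b hb
end

section
/- Let X ∼ B(v₁,q) and Y ∼ B(v₂,q) be two independent binomially distributed random variables with q ∈ (0,1). Then for any integers l and u with u < v₁ + v₂ and (u − v₂) ∨ 0 < l ≤ u ∧ v₁, one has ((v₁ − l + 1)/(v₁ + v₂ − u)) · P(X = l−1 | X+Y = u) + ((v₂ − u + l)/(v₁ + v₂ − u)) · P(X = l | X+Y = u) = P(X = l | X+Y = u+1). Moreover, when u < v₂, ((v₂ − u)/(v₁ + v₂ − u)) · P(X = 0 | X+Y = u) = P(X = 0 | X+Y = u+1). -/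
/-!
Given `X + Y = u`, the factors `q ^ u * (1 - q) ^ (v₁ + v₂ - u)` of the joint probabilities cancel,
so by Vandermonde's identity `X` is hypergeometric:
`P(X = l | X + Y = u) = C(v₁, l) C(v₂, u - l) / C(v₁ + v₂, u)`.
Both recursions then follow from `(k + 1) C(n, k + 1) = (n - k) C(n, k)`, applied to each of the
three binomial coefficients.
-/

noncomputable section

/-- The probability mass function of the binomial distribution `B(v,q)` at `k`. -/
def binomPMF (v : ℕ) (q : ℝ) (k : ℕ) : ℝ :=
  (v.choose k : ℝ) * q ^ k * (1 - q) ^ (v - k)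

/-- `P(X = l | X + Y = u)` for independent `X ~ B(v₁,q)`, `Y ~ B(v₂,q)`:
the joint probability `P(X = l, Y = u - l)` divided by
`P(X + Y = u) = ∑_{j=0}^{u} P(X = j) P(Y = u - j)`. -/
def condBinom (v₁ v₂ : ℕ) (q : ℝ) (u l : ℕ) : ℝ :=
  (binomPMF v₁ q l * binomPMF v₂ q (u - l)) /
    ∑ j ∈ Finset.range (u + 1), binomPMF v₁ q j * binomPMF v₂ q (u - j)

lemma cast_choose_succ_mul {R : Type*} [CommRing R] (n k : ℕ) :
    (n.choose (k + 1) : R) * (k + 1) = n.choose k * (n - k) := by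
  rcases le_or_gt k n with hk | hk
  · have h := congrArg (Nat.cast : ℕ → R) (Nat.choose_succ_right_eq n k)
    push_cast [Nat.cast_sub hk] at h
    exact h
  · simp [Nat.choose_eq_zero_of_lt hk, Nat.choose_eq_zero_of_lt (hk.trans (Nat.lt_succ_self k))]

lemma binomPMF_mul_binomPMF (v₁ v₂ : ℕ) (q : ℝ) {u j : ℕ} (hj : j ≤ u) :
    binomPMF v₁ q j * binomPMF v₂ q (u - j)
      = (v₁.choose j * v₂.choose (u - j) : ℝ) * (q ^ u * (1 - q) ^ (v₁ + v₂ - u)) := by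
  unfold binomPMF
  rcases le_or_gt j v₁ with h₁ | h₁
  · rcases le_or_gt (u - j) v₂ with h₂ | h₂
    · rw [show u = j + (u - j) by omega, show v₁ + v₂ - (j + (u - j)) = (v₁ - j) + (v₂ - (u - j))
        by omega, Nat.add_sub_cancel_left, pow_add, pow_add]
      ring
    · simp [Nat.choose_eq_zero_of_lt h₂]
  · simp [Nat.choose_eq_zero_of_lt h₁]

lemma sum_binomPMF_mul_binomPMF (v₁ v₂ : ℕ) (q : ℝ) (u : ℕ) :
    ∑ j ∈ Finset.range (u + 1), binomPMF v₁ q j * binomPMF v₂ q (u - j)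
      = ((v₁ + v₂).choose u : ℝ) * (q ^ u * (1 - q) ^ (v₁ + v₂ - u)) := by
  rw [Finset.sum_congr rfl fun j hj =>
    binomPMF_mul_binomPMF v₁ v₂ q (Finset.mem_range_succ_iff.mp hj),
    ← Finset.sum_mul, Nat.add_choose_eq, Finset.Nat.sum_antidiagonal_eq_sum_range_succ_mk]
  push_cast
  rfl

lemma condBinom_eq_choose (v₁ v₂ : ℕ) {q : ℝ} (hq0 : q ≠ 0) (hq1 : q ≠ 1) {u l : ℕ}
    (hl : l ≤ u) :
    condBinom v₁ v₂ q u l = (v₁.choose l * v₂.choose (u - l) : ℝ) / (v₁ + v₂).choose u := by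
  have hpow : q ^ u * (1 - q) ^ (v₁ + v₂ - u) ≠ 0 :=
    mul_ne_zero (pow_ne_zero _ hq0) (pow_ne_zero _ (sub_ne_zero.mpr hq1.symm))
  rw [condBinom, sum_binomPMF_mul_binomPMF, binomPMF_mul_binomPMF v₁ v₂ q hl,
    mul_div_mul_right _ _ hpow]

lemma condBinom_succ (v₁ v₂ : ℕ) {q : ℝ} (hq0 : q ≠ 0) (hq1 : q ≠ 1) {u l : ℕ} (hl : 0 < l)
    (hlu : l ≤ u) (hu : u < v₁ + v₂) :
    ((v₁ : ℝ) - l + 1) / ((v₁ : ℝ) + v₂ - u) * condBinom v₁ v₂ q u (l - 1) +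
        ((v₂ : ℝ) - u + l) / ((v₁ : ℝ) + v₂ - u) * condBinom v₁ v₂ q u l
      = condBinom v₁ v₂ q (u + 1) l := by
  obtain ⟨m, rfl⟩ : ∃ m, l = m + 1 := ⟨l - 1, by omega⟩
  obtain ⟨k, rfl⟩ : ∃ k, u = m + 1 + k := ⟨u - (m + 1), by omega⟩
  rw [condBinom_eq_choose v₁ v₂ hq0 hq1 (by omega), condBinom_eq_choose v₁ v₂ hq0 hq1 hlu,
    condBinom_eq_choose v₁ v₂ hq0 hq1 (by omega), show m + 1 + k - (m + 1 - 1) = k + 1 by omega,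
    show m + 1 + k - (m + 1) = k by omega, show m + 1 + k + 1 - (m + 1) = k + 1 by omega,
    Nat.add_sub_cancel]
  have hgap : (0 : ℝ) < v₁ + v₂ - (m + 1 + k : ℕ) := by
    rw [sub_pos]; exact_mod_cast hu
  have hcu : ((v₁ + v₂).choose (m + 1 + k) : ℝ) ≠ 0 :=
    Nat.cast_ne_zero.mpr (Nat.choose_ne_zero hu.le)
  have hcu' : ((v₁ + v₂).choose (m + 1 + k + 1) : ℝ) ≠ 0 :=
    Nat.cast_ne_zero.mpr (Nat.choose_ne_zero hu)
  have h₁ := cast_choose_succ_mul (R := ℝ) v₁ m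
  have h₂ := cast_choose_succ_mul (R := ℝ) v₂ k
  have h₃ := cast_choose_succ_mul (R := ℝ) (v₁ + v₂) (m + 1 + k)
  push_cast at h₃ hgap ⊢
  field_simp
  linear_combination -(v₂.choose (k + 1) * (v₁ + v₂).choose (m + 1 + k + 1) : ℝ) * h₁
    - (v₁.choose (m + 1) * (v₁ + v₂).choose (m + 1 + k + 1) : ℝ) * h₂
    + (v₁.choose (m + 1) * v₂.choose (k + 1) : ℝ) * h₃

lemma condBinom_succ_zero (v₁ v₂ : ℕ) {q : ℝ} (hq0 : q ≠ 0) (hq1 : q ≠ 1) {u : ℕ}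
    (hu : u < v₁ + v₂) :
    ((v₂ : ℝ) - u) / ((v₁ : ℝ) + v₂ - u) * condBinom v₁ v₂ q u 0
      = condBinom v₁ v₂ q (u + 1) 0 := by
  rw [condBinom_eq_choose v₁ v₂ hq0 hq1 u.zero_le,
    condBinom_eq_choose v₁ v₂ hq0 hq1 (u + 1).zero_le]
  simp only [Nat.sub_zero, Nat.choose_zero_right, Nat.cast_one, one_mul]
  have hgap : (0 : ℝ) < v₁ + v₂ - u := by
    rw [sub_pos]; exact_mod_cast hu
  have hcu : ((v₁ + v₂).choose u : ℝ) ≠ 0 :=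
    Nat.cast_ne_zero.mpr (Nat.choose_ne_zero hu.le)
  have hcu' : ((v₁ + v₂).choose (u + 1) : ℝ) ≠ 0 :=
    Nat.cast_ne_zero.mpr (Nat.choose_ne_zero hu)
  have h₂ := cast_choose_succ_mul (R := ℝ) v₂ u
  have h₃ := cast_choose_succ_mul (R := ℝ) (v₁ + v₂) u
  push_cast at h₃ ⊢
  field_simp
  linear_combination -((v₁ + v₂).choose (u + 1) : ℝ) * h₂ + (v₂.choose (u + 1) : ℝ) * h₃

/-- for independent `X ~ B(v₁,q)`, `Y ~ B(v₂,q)` with `q ∈ (0,1)` and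
integers `u < v₁ + v₂` and `(u - v₂) ∨ 0 < l ≤ u ∧ v₁` (note that for naturals the
truncated subtraction `u - v₂` equals `(u - v₂) ∨ 0`):
`((v₁-l+1)/(v₁+v₂-u))·P(X=l-1|X+Y=u) + ((v₂-u+l)/(v₁+v₂-u))·P(X=l|X+Y=u) = P(X=l|X+Y=u+1)`;
moreover, when `u < v₂`, `((v₂-u)/(v₁+v₂-u))·P(X=0|X+Y=u) = P(X=0|X+Y=u+1)`. -/
theorem binomial_conditional_recursion
    (v₁ v₂ : ℕ) (q : ℝ) (hq0 : 0 < q) (hq1 : q < 1) (u : ℕ) (hu : u < v₁ + v₂) :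
    (∀ l : ℕ, u - v₂ < l → l ≤ min u v₁ →
      ((v₁ : ℝ) - l + 1) / ((v₁ : ℝ) + v₂ - u) * condBinom v₁ v₂ q u (l - 1) +
        ((v₂ : ℝ) - u + l) / ((v₁ : ℝ) + v₂ - u) * condBinom v₁ v₂ q u l
        = condBinom v₁ v₂ q (u + 1) l) ∧
    (u < v₂ →
      ((v₂ : ℝ) - u) / ((v₁ : ℝ) + v₂ - u) * condBinom v₁ v₂ q u 0
        = condBinom v₁ v₂ q (u + 1) 0) :=
  ⟨fun _ hl hlu => condBinom_succ v₁ v₂ hq0.ne' hq1.ne (by omega)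
      (hlu.trans (min_le_left u v₁)) hu,
    fun _ => condBinom_succ_zero v₁ v₂ hq0.ne' hq1.ne hu⟩
end
end

section
/- Let Z₁, Z₂, … be a Markov chain on a finite state space X with transition matrix ℙ = (p_{xy})_{x,y∈X}. Suppose {A_i}_{i∈I} is a partition of X and define π : X → I by π(x) = i if and only if x ∈ A_i. Then the following are equivalent: (1) for every initial distribution of Z₀, the process π(Z₁), π(Z₂), … is a Markov chain on I with transition matrix ℚ = (q_{ij})_{i,j∈I}; (2) for all i, j ∈ I and every x ∈ A_i, Σ_{y∈A_j} p_{xy} = q_{ij}. -/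
open Finset

noncomputable section

/-- Law of the path `(Z₀, …, Z_n)` of a Markov chain with initial distribution `μ` and
transition matrix `p`, as a pmf on `Fin (n+1) → X`. -/
def pathLaw {X : Type*} (μ : X → ℝ) (p : X → X → ℝ) (n : ℕ) (z : Fin (n + 1) → X) : ℝ :=
  μ (z 0) * ∏ i : Fin n, p (z i.castSucc) (z i.succ)

open Classical in
/-- Probability of a path event under the Markov chain with initial distribution `μ`. -/
def prPath {X : Type*} [Fintype X] (μ : X → ℝ) (p : X → X → ℝ) (n : ℕ)
    (E : (Fin (n + 1) → X) → Prop) : ℝ :=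
  ∑ z, if E z then pathLaw μ p n z else 0

/-!
Conditioning on the last step, the probability that the lumped path is `i₀, …, i_{n+1}` is
`∑ P(z) · ∑_{y ∈ A_{i_{n+1}}} p (z n) y` over the paths `z` whose lumped path is `i₀, …, i_n`.
Under (2) the inner sum is `q i_n i_{n+1}` for each such `z`, so it factors out and leaves the
probability of the conditioning event. Conversely, for the chain started at `x ∈ A_i`, the
conditional probability of the lumped step `i → j` is exactly `∑_{y ∈ A_j} p x y`.
-/

section PathProbability

variable {X : Type*} (μ : X → ℝ) (p : X → X → ℝ)

theorem pathLaw_snoc (n : ℕ) (f : Fin (n + 1) → X) (y : X) :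
    pathLaw μ p (n + 1) (Fin.snoc f y) = pathLaw μ p n f * p (f (Fin.last n)) y := by
  simp only [pathLaw, Fin.prod_univ_castSucc, Fin.succ_castSucc, Fin.succ_last,
    Fin.snoc_castSucc, Fin.snoc_last]
  rw [show (0 : Fin (n + 2)) = Fin.castSucc 0 from rfl, Fin.snoc_castSucc, mul_assoc]

variable [Fintype X]

theorem prPath_congr {n : ℕ} {E E' : (Fin (n + 1) → X) → Prop} (h : ∀ z, E z ↔ E' z) :
    prPath μ p n E = prPath μ p n E' :=
  congrArg (prPath μ p n) (funext fun z => propext (h z))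

theorem sum_fin_snoc {M : Type*} [AddCommMonoid M] (n : ℕ) (g : (Fin (n + 1) → X) → M) :
    ∑ z, g z = ∑ f : Fin n → X, ∑ y, g (Fin.snoc f y) := by
  rw [← (Fin.snocEquiv fun _ => X).sum_comp g, Fintype.sum_prod_type, Finset.sum_comm]
  rfl

theorem prPath_init_and_last (n : ℕ) (E : (Fin (n + 1) → X) → Prop) (F : X → Prop)
    [DecidablePred E] [DecidablePred F] :
    prPath μ p (n + 1) (fun z => E (Fin.init z) ∧ F (z (Fin.last _))) =
      ∑ f, if E f then pathLaw μ p n f * ∑ y ∈ univ.filter F, p (f (Fin.last n)) y else 0 := by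
  rw [prPath, sum_fin_snoc]
  refine sum_congr rfl fun f _ => ?_
  simp only [Fin.init_snoc, Fin.snoc_last, pathLaw_snoc]
  by_cases hE : E f
  · simp only [hE, true_and, if_true, mul_sum, sum_filter, mul_ite, mul_zero]
  · simp [hE]

theorem prPath_init_and_last_of_sum_eq (n : ℕ) (E : (Fin (n + 1) → X) → Prop) (F : X → Prop)
    [DecidablePred F] (c : ℝ)
    (hc : ∀ f, E f → ∑ y ∈ univ.filter F, p (f (Fin.last n)) y = c) :
    prPath μ p (n + 1) (fun z => E (Fin.init z) ∧ F (z (Fin.last _))) = c * prPath μ p n E := by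
  classical
  rw [prPath_init_and_last, prPath, mul_sum]
  refine sum_congr rfl fun f _ => ?_
  by_cases hE : E f
  · rw [if_pos hE, if_pos hE, hc f hE, mul_comm]
  · rw [if_neg hE, if_neg hE, mul_zero]

theorem prPath_single_one [DecidableEq X] (x : X) (E F : X → Prop) [DecidablePred E]
    [DecidablePred F] :
    prPath (Pi.single x 1) p 1 (fun z => E (z 0) ∧ F (z 1)) =
      if E x then ∑ y ∈ univ.filter F, p x y else 0 := by
  refine (prPath_init_and_last _ p 0 (fun f => E (f 0)) F).trans ?_
  rw [Fintype.sum_eq_single (fun _ => x)]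
  · simp [pathLaw]
  · intro f hf
    have hf0 : f 0 ≠ x := fun h => hf (funext fun i => Fin.fin_one_eq_zero i ▸ h)
    simp [pathLaw, hf0]

end PathProbability

theorem prPath_lumped_eq_mul_prefix {X I : Type*} [Fintype X] [DecidableEq I] (p : X → X → ℝ)
    (hprow : ∀ x, ∑ y, p x y = 1) (π : X → I) (q : I → I → ℝ)
    (hblock : ∀ (i j : I) (x : X), π x = i →
      ∑ y ∈ univ.filter (fun y => π y = j), p x y = q i j)
    (μ : X → ℝ) (n : ℕ) (is : Fin (n + 2) → I) :
    prPath μ p (n + 1) (fun z => ∀ t : Fin (n + 2), π (z t) = is t) =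
      q (is (Fin.last n).castSucc) (is (Fin.last (n + 1))) *
        prPath μ p (n + 1) (fun z => ∀ t : Fin (n + 2), (t : ℕ) < n + 1 → π (z t) = is t) := by
  set prefixEvent : (Fin (n + 1) → X) → Prop := fun f => ∀ s, π (f s) = is s.castSucc
  have hprefix : prPath μ p (n + 1)
      (fun z => ∀ t : Fin (n + 2), (t : ℕ) < n + 1 → π (z t) = is t) =
        1 * prPath μ p n prefixEvent :=
    (prPath_congr μ p (by simp [prefixEvent, Fin.forall_fin_succ', Fin.init])).trans <|
      prPath_init_and_last_of_sum_eq μ p n prefixEvent (fun _ => True) 1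
        fun f _ => by rw [filter_true, hprow]
  rw [hprefix, one_mul]
  exact (prPath_congr μ p (by simp [prefixEvent, Fin.forall_fin_succ', Fin.init])).trans <|
    prPath_init_and_last_of_sum_eq μ p n prefixEvent (π · = is (Fin.last _)) _
      fun f hf => hblock _ _ _ (hf (Fin.last n))

open Classical in
/-- lumping of Markov chains: let `Z₀, Z₁, …` be a Markov chain on a
finite state space `X` with transition matrix `p`, and let `{A_i}_{i ∈ I}` be a
partition of `X`, encoded by the surjection `π : X → I` with fibers `A_i = π⁻¹(i)`.
Then the following are equivalent:
(1) for every initial distribution `μ`, the process `π(Z₀), π(Z₁), …` is a Markov chain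
on `I` with transition matrix `q`, i.e. whenever the conditioning event has positive
probability, `P(π(Z_{n+1}) = i_{n+1} | π(Z_n) = i_n, …, π(Z₀) = i₀) = q i_n i_{n+1}`;
(2) for all `i, j ∈ I` and every `x ∈ A_i`, `Σ_{y ∈ A_j} p x y = q i j`. -/
theorem lumped_markov_chain_iff
    {X I : Type*} [Fintype X]
    (p : X → X → ℝ) (hprow : ∀ x, ∑ y, p x y = 1)
    (π : X → I)
    (q : I → I → ℝ) :
    (∀ μ : X → ℝ, (∀ x, 0 ≤ μ x) → (∑ x, μ x = 1) →
      ∀ n : ℕ, ∀ is : Fin (n + 2) → I,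
        0 < prPath μ p (n + 1) (fun z => ∀ t : Fin (n + 2), (t : ℕ) < n + 1 → π (z t) = is t) →
        prPath μ p (n + 1) (fun z => ∀ t : Fin (n + 2), π (z t) = is t) /
            prPath μ p (n + 1) (fun z => ∀ t : Fin (n + 2), (t : ℕ) < n + 1 → π (z t) = is t)
          = q (is ⟨n, by omega⟩) (is ⟨n + 1, by omega⟩))
    ↔ (∀ (i j : I) (x : X), π x = i → ∑ y ∈ univ.filter (fun y => π y = j), p x y = q i j) := by
  constructor
  · intro hlumped i j x hx
    have hden : prPath (Pi.single x 1) p 1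
        (fun z => ∀ t : Fin 2, (t : ℕ) < 0 + 1 → π (z t) = ![i, j] t) = 1 :=
      (prPath_congr _ p (by simp)).trans <|
        (prPath_single_one p x (π · = i) fun _ => True).trans (by rw [if_pos hx, filter_true, hprow])
    have hnum : prPath (Pi.single x 1) p 1 (fun z => ∀ t : Fin 2, π (z t) = ![i, j] t) =
        ∑ y ∈ univ.filter (fun y => π y = j), p x y :=
      (prPath_congr _ p (by simp [Fin.forall_fin_two])).trans <|
        (prPath_single_one p x (π · = i) (π · = j)).trans (if_pos hx)
    have hsingle : 0 ≤ (Pi.single x 1 : X → ℝ) := by simp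
    have h := hlumped (Pi.single x 1) hsingle (by simp) 0 ![i, j]
      (lt_of_lt_of_eq one_pos hden.symm)
    rwa [hnum, hden, div_one] at h
  · intro hblock μ _ _ n is hpos
    rw [prPath_lumped_eq_mul_prefix p hprow π q hblock, mul_div_cancel_right₀ _ hpos.ne']
    rfl
end
end

section
/- If Z has law P_{(u,v)} for some 0 ≤ u < v (i.e., Z is distributed as the chain conditioned on U = u and V = v), then 𝓡(Z) has law P_{(u+1,v)}. -/
open Finset

noncomputable section

/-- Law of the first `n` terms `(Z₁, …, Z_n)` of a Markov chain with initial
distribution `π` and transition matrix `p`, as a pmf on `Fin n → S`. -/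
def chainLaw {S : Type*} (π : S → ℝ) (p : S → S → ℝ) (n : ℕ) (z : Fin n → S) : ℝ :=
  if hn : 0 < n then
    π (z ⟨0, hn⟩) *
      ∏ i : Fin (n - 1),
        p (z ⟨i.1, by have := i.isLt; omega⟩) (z ⟨i.1 + 1, by have := i.isLt; omega⟩)
  else 1

/-- The position of the first letter of the `i`-th triplet (`0`-indexed). -/
def posA (n : ℕ) (i : Fin (n / 3)) : Fin n := ⟨3 * i.1, by have := i.isLt; omega⟩
/-- The position of the middle letter of the `i`-th triplet. -/
def posM (n : ℕ) (i : Fin (n / 3)) : Fin n := ⟨3 * i.1 + 1, by have := i.isLt; omega⟩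
/-- The position of the last letter of the `i`-th triplet. -/
def posB (n : ℕ) (i : Fin (n / 3)) : Fin n := ⟨3 * i.1 + 2, by have := i.isLt; omega⟩

open Classical in
/-- `V`: the number of `(𝐀·𝐁)`-triplets. -/
def Vcount {S : Type*} (A B : S) (n : ℕ) (z : Fin n → S) : ℕ :=
  (univ.filter fun i : Fin (n / 3) => z (posA n i) = A ∧ z (posB n i) = B).card

open Classical in
/-- `U`: the number of `(𝐀·𝐁)`-triplets with middle letter `𝐃`. -/
def Ucount {S : Type*} (A B D : S) (n : ℕ) (z : Fin n → S) : ℕ :=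
  (univ.filter fun i : Fin (n / 3) =>
    z (posA n i) = A ∧ z (posB n i) = B ∧ z (posM n i) = D).card

open Classical in
/-- The random transformation `𝓡` as a Markov kernel: it picks, uniformly at random,
one of the `(𝐀·𝐁)`-triplets whose middle letter is not `𝐃`, and replaces that middle
letter by `𝐃` (acting as the identity if there is no such triplet). -/
def kernelR {S : Type*} (A B D : S) (n : ℕ) (z z' : Fin n → S) : ℝ :=
  let J : Finset (Fin (n / 3)) := univ.filter fun i =>
    z (posA n i) = A ∧ z (posB n i) = B ∧ z (posM n i) ≠ D
  if J.Nonempty then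
    ((J.filter fun i => Function.update z (posM n i) D = z').card : ℝ) / J.card
  else if z' = z then 1 else 0

/-- The conditional law `P_{(u,v)}` of the chain given `U = u`, `V = v`. -/
def condLawUV {𝔸 : Type*} [Fintype 𝔸] (π : (𝔸 × 𝔸) → ℝ) (p : (𝔸 × 𝔸) → (𝔸 × 𝔸) → ℝ)
    (A B D : 𝔸 × 𝔸) (n : ℕ) (u v : ℕ) (z : Fin n → 𝔸 × 𝔸) : ℝ :=
  (if Ucount A B D n z = u ∧ Vcount A B n z = v then chainLaw π p n z else 0) /
    prOf (chainLaw π p n) (fun w => Ucount A B D n w = u ∧ Vcount A B n w = v)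

/-!
Fix `z'` with `U(z') = u + 1` and `V(z') = v`. The sequences `z` that `𝓡` can move to `z'` are
obtained by choosing one of the `u + 1` `(𝐀𝐃𝐁)`-triplets of `z'` and replacing its middle letter
by some `c ≠ 𝐃`; this multiplies the chain law by `p_{𝐀c} p_{c𝐁} / (p_{𝐀𝐃} p_{𝐃𝐁})`, and every
such `z` has exactly `v - u` possible moves. Hence the pushforward of `P_{(u,v)}` is proportional
to the chain law restricted to `{U = u + 1, V = v}`, and since `𝓡` is a Markov kernel the constant
of proportionality is the normalisation of `P_{(u+1,v)}`.
-/

-- `Ucount`, `Vcount` and `kernelR` decide their predicates classically; so does everything below,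
-- which keeps the decidability instances syntactically equal to theirs.
open Classical

theorem Fintype.sum_ite_update_eq {ι α M : Type*} [Fintype ι] [DecidableEq ι] [Fintype α]
    [AddCommMonoid M] (k : ι) (a : α) (y : ι → α) (h : (ι → α) → M) :
    ∑ x, (if Function.update x k a = y then h x else 0) =
      if y k = a then ∑ c, h (Function.update y k c) else 0 := by
  split_ifs with hy
  · rw [← Finset.sum_filter]
    refine Finset.sum_nbij' (fun x => x k) (Function.update y k) (by simp) ?_ ?_ (by simp) ?_
    · intro c _
      simp [← hy]
    · intro x hx
      rw [← (mem_filter_univ x).1 hx]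
      simp
    · intro x hx
      rw [← (mem_filter_univ x).1 hx]
      simp
  · refine Finset.sum_eq_zero fun x _ => if_neg ?_
    rintro rfl
    simp at hy

theorem eq_div_sum_of_eq_const_mul {ι : Type*} [Fintype ι] {g f : ι → ℝ} (c : ℝ)
    (hg : ∀ i, g i = c * f i) (hsum : ∑ i, g i = 1) (i : ι) : g i = f i / ∑ j, f j := by
  have hc : c * ∑ j, f j = 1 := by simp_rw [Finset.mul_sum, ← hg, hsum]
  have hf : ∑ j, f j ≠ 0 := by rintro h; simp [h] at hc
  rw [hg, eq_div_iff hf]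
  linear_combination f i * hc

section Positions

variable {n : ℕ}

theorem posA_ne_posM (i j : Fin (n / 3)) : posA n i ≠ posM n j := by
  simp only [posA, posM, ne_eq, Fin.mk.injEq]; omega

theorem posB_ne_posM (i j : Fin (n / 3)) : posB n i ≠ posM n j := by
  simp only [posB, posM, ne_eq, Fin.mk.injEq]; omega

theorem posM_injective : Function.Injective (posM n) := fun i j h => by
  simp only [posM, Fin.mk.injEq] at h
  exact Fin.ext (by omega)

variable {S : Type*} (z : Fin n → S) (i j : Fin (n / 3)) (c : S)

@[simp]
theorem update_posM_posA : Function.update z (posM n i) c (posA n j) = z (posA n j) :=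
  Function.update_of_ne (posA_ne_posM j i) _ _

@[simp]
theorem update_posM_posB : Function.update z (posM n i) c (posB n j) = z (posB n j) :=
  Function.update_of_ne (posB_ne_posM j i) _ _

theorem update_posM_posM_of_ne {i j : Fin (n / 3)} (h : j ≠ i) :
    Function.update z (posM n i) c (posM n j) = z (posM n j) :=
  Function.update_of_ne (posM_injective.ne h) _ _

end Positions

section Counts

variable {S : Type*} (A B D : S) (n : ℕ)

def nonDTriplets (z : Fin n → S) : Finset (Fin (n / 3)) :=
  {i | z (posA n i) = A ∧ z (posB n i) = B ∧ z (posM n i) ≠ D}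

variable {n}

theorem card_nonDTriplets_add_Ucount (z : Fin n → S) :
    #(nonDTriplets A B D n z) + Ucount A B D n z = Vcount A B n z := by
  rw [nonDTriplets, Ucount, Vcount,
    ← card_union_of_disjoint (disjoint_filter.2 fun _ _ h h' => h.2.2 h'.2.2)]
  congr 1
  ext i
  by_cases h : z (posM n i) = D <;> simp [h]

theorem mem_nonDTriplets_update_posM (z : Fin n → S) (i : Fin (n / 3)) (c : S) :
    i ∈ nonDTriplets A B D n (Function.update z (posM n i) c) ↔
      z (posA n i) = A ∧ z (posB n i) = B ∧ c ≠ D := by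
  simp [nonDTriplets]

theorem Vcount_update_posM (z : Fin n → S) (i : Fin (n / 3)) (c : S) :
    Vcount A B n (Function.update z (posM n i) c) = Vcount A B n z := by
  simp [Vcount]

theorem Ucount_update_posM_add_one {z : Fin n → S} {i : Fin (n / 3)} {c : S}
    (hA : z (posA n i) = A) (hB : z (posB n i) = B) (hD : z (posM n i) = D) (hc : c ≠ D) :
    Ucount A B D n (Function.update z (posM n i) c) + 1 = Ucount A B D n z := by
  rw [Ucount, Ucount]
  conv_rhs => rw [← card_erase_add_one (a := i) (by simp [hA, hB, hD])]
  congr 2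
  ext j
  by_cases hj : j = i
  · simp [hj, hc]
  · simp [hj, update_posM_posM_of_ne z c hj]

end Counts

section Kernel

variable {S : Type*} (A B D : S) {n : ℕ} {z : Fin n → S}

theorem kernelR_of_nonempty (h : (nonDTriplets A B D n z).Nonempty) (z' : Fin n → S) :
    kernelR A B D n z z' =
      #{i ∈ nonDTriplets A B D n z | Function.update z (posM n i) D = z'} /
        #(nonDTriplets A B D n z) :=
  if_pos h

theorem kernelR_of_not_nonempty (h : ¬(nonDTriplets A B D n z).Nonempty) (z' : Fin n → S) :
    kernelR A B D n z z' = if z' = z then 1 else 0 :=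
  if_neg h

theorem sum_kernelR [Fintype S] (z : Fin n → S) : ∑ z', kernelR A B D n z z' = 1 := by
  by_cases h : (nonDTriplets A B D n z).Nonempty
  · simp_rw [kernelR_of_nonempty A B D h, ← Finset.sum_div, ← Nat.cast_sum,
      ← card_eq_sum_card_fiberwise (fun _ _ => mem_univ _)]
    exact div_self (by simpa using h.ne_empty)
  · simp [kernelR_of_not_nonempty A B D h]

end Kernel

section ChainLaw

variable {S : Type*} (π : S → ℝ) (p : S → S → ℝ) {n : ℕ}

theorem chainLaw_update_posM (z : Fin n → S) (i : Fin (n / 3)) :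
    ∃ K, ∀ c, chainLaw π p n (Function.update z (posM n i) c) =
      p (z (posA n i)) c * p c (z (posB n i)) * K := by
  have hi : 3 * i.1 + 2 < n := (posB n i).isLt
  set a : Fin (n - 1) := ⟨3 * i.1, by omega⟩
  set b : Fin (n - 1) := ⟨3 * i.1 + 1, by omega⟩
  have hb : b ∈ univ.erase a := by simp [a, b, Fin.ext_iff]
  refine ⟨π (z ⟨0, by omega⟩) * ∏ j ∈ (univ.erase a).erase b,
    p (z ⟨j.1, by omega⟩) (z ⟨j.1 + 1, by omega⟩), fun c => ?_⟩
  rw [chainLaw, dif_pos (by omega), ← mul_prod_erase _ _ (mem_univ a),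
    ← mul_prod_erase _ _ hb]
  have h0 : Function.update z (posM n i) c ⟨0, by omega⟩ = z ⟨0, by omega⟩ :=
    Function.update_of_ne (by simp [posM, Fin.ext_iff]) _ _
  have hrest : ∀ j ∈ (univ.erase a).erase b,
      p (Function.update z (posM n i) c ⟨j.1, by omega⟩)
        (Function.update z (posM n i) c ⟨j.1 + 1, by omega⟩) =
      p (z ⟨j.1, by omega⟩) (z ⟨j.1 + 1, by omega⟩) := by
    intro j hj
    simp only [mem_erase, ne_eq, Fin.ext_iff, a, b] at hj
    rw [Function.update_of_ne (by simp [posM, Fin.ext_iff]; omega),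
      Function.update_of_ne (by simp [posM, Fin.ext_iff]; omega)]
  rw [h0, prod_congr rfl hrest]
  change π _ * (p (Function.update z (posM n i) c (posA n i))
    (Function.update z (posM n i) c (posM n i)) * (p (Function.update z (posM n i) c (posM n i))
    (Function.update z (posM n i) c (posB n i)) * _)) = _
  simp only [update_posM_posA, update_posM_posB, Function.update_self]
  ring

end ChainLaw

section Weights

variable {S : Type*} (π : S → ℝ) (p : S → S → ℝ) (A B D : S) (n : ℕ)

def chainLawUV (u v : ℕ) (z : Fin n → S) : ℝ :=
  if Ucount A B D n z = u ∧ Vcount A B n z = v then chainLaw π p n z else 0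

theorem prOf_chainLaw_eq_sum [Fintype S] (u v : ℕ) :
    prOf (chainLaw π p n) (fun w => Ucount A B D n w = u ∧ Vcount A B n w = v) =
      ∑ w, chainLawUV π p A B D n u v w := by
  simp only [prOf, chainLawUV]
  congr!

variable {π p A B D n}

theorem Ucount_mul_chainLawUV (u v : ℕ) (z : Fin n → S) :
    (Ucount A B D n z : ℝ) * chainLawUV π p A B D n u v z = u * chainLawUV π p A B D n u v z := by
  unfold chainLawUV
  split_ifs with h
  · rw [h.1]
  · simp

theorem chainLawUV_update_posM_mul {u v : ℕ} {z : Fin n → S} {i : Fin (n / 3)} {c : S}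
    (hA : z (posA n i) = A) (hB : z (posB n i) = B) (hD : z (posM n i) = D) (hc : c ≠ D) :
    chainLawUV π p A B D n u v (Function.update z (posM n i) c) * (p A D * p D B) =
      chainLawUV π p A B D n (u + 1) v z * (p A c * p c B) := by
  obtain ⟨K, hK⟩ := chainLaw_update_posM π p z i
  have hz : chainLaw π p n z = p A D * p D B * K := by
    rw [← hA, ← hB, ← hK, Function.update_eq_self_iff.2 hD.symm]
  have hE : Ucount A B D n (Function.update z (posM n i) c) = u ↔ Ucount A B D n z = u + 1 := by
    rw [← Ucount_update_posM_add_one A B D hA hB hD hc, Nat.add_right_cancel_iff]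
  simp only [chainLawUV, hE, Vcount_update_posM, hK c, hz, hA, hB]
  split_ifs <;> ring

end Weights

theorem condLawUV_eq_div {𝔸 : Type*} [Fintype 𝔸] (π : 𝔸 × 𝔸 → ℝ) (p : 𝔸 × 𝔸 → 𝔸 × 𝔸 → ℝ)
    (A B D : 𝔸 × 𝔸) (n u v : ℕ) (z : Fin n → 𝔸 × 𝔸) :
    condLawUV π p A B D n u v z =
      chainLawUV π p A B D n u v z / ∑ w, chainLawUV π p A B D n u v w := by
  rw [← prOf_chainLaw_eq_sum]
  rfl

section Pushforward

variable {S : Type*} {π : S → ℝ} {p : S → S → ℝ} {A B D : S} {n u v : ℕ}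

theorem chainLawUV_mul_kernelR (huv : u < v) (z z' : Fin n → S) :
    chainLawUV π p A B D n u v z * kernelR A B D n z z' =
      chainLawUV π p A B D n u v z *
        #{i ∈ nonDTriplets A B D n z | Function.update z (posM n i) D = z'} / (v - u) := by
  unfold chainLawUV
  split_ifs with h
  · have hcard : #(nonDTriplets A B D n z) = v - u := by
      have := card_nonDTriplets_add_Ucount A B D z
      omega
    rw [kernelR_of_nonempty A B D (card_pos.1 (by omega)), hcard, Nat.cast_sub huv.le]
    ring
  · simp

variable [Fintype S]

theorem sum_chainLawUV_update_posM_eq_mul (z' : Fin n → S) (i : Fin (n / 3)) :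
    (∑ z, if Function.update z (posM n i) D = z' ∧ i ∈ nonDTriplets A B D n z
        then chainLawUV π p A B D n u v z else 0) * (p A D * p D B) =
      if z' (posA n i) = A ∧ z' (posB n i) = B ∧ z' (posM n i) = D then
        chainLawUV π p A B D n (u + 1) v z' * ∑ c ∈ univ.erase D, p A c * p c B else 0 := by
  simp_rw [ite_and, Fintype.sum_ite_update_eq, ← ite_and, mem_nonDTriplets_update_posM]
  by_cases hD : z' (posM n i) = D
  · by_cases hAB : z' (posA n i) = A ∧ z' (posB n i) = B
    · simp only [hD, hAB, true_and, if_true, sum_mul, mul_sum, ite_mul, zero_mul]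
      rw [← sum_filter, filter_ne' univ D]
      exact sum_congr rfl fun c hc =>
        chainLawUV_update_posM_mul hAB.1 hAB.2 hD (ne_of_mem_erase hc)
    · simp only [if_pos hD, ← and_assoc, hAB, false_and, if_false, sum_const_zero, zero_mul]
  · simp [hD]

theorem sum_chainLawUV_mul_card_update_eq (z' : Fin n → S) :
    (∑ z, chainLawUV π p A B D n u v z *
        #{i ∈ nonDTriplets A B D n z | Function.update z (posM n i) D = z'}) * (p A D * p D B) =
      (u + 1) * chainLawUV π p A B D n (u + 1) v z' * ∑ c ∈ univ.erase D, p A c * p c B := by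
  calc _ = (∑ i, ∑ z, if Function.update z (posM n i) D = z' ∧ i ∈ nonDTriplets A B D n z
          then chainLawUV π p A B D n u v z else 0) * (p A D * p D B) := by
        rw [sum_comm]
        refine congrArg (· * _) (sum_congr rfl fun z _ => ?_)
        rw [← sum_filter, sum_const, nsmul_eq_mul, mul_comm]
        congr 3
        ext i
        simp [and_comm]
    _ = ∑ i, if z' (posA n i) = A ∧ z' (posB n i) = B ∧ z' (posM n i) = D then
          chainLawUV π p A B D n (u + 1) v z' * ∑ c ∈ univ.erase D, p A c * p c B else 0 := by
        rw [sum_mul]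
        exact sum_congr rfl fun i _ => sum_chainLawUV_update_posM_eq_mul z' i
    _ = _ := by
      rw [← sum_filter, sum_const, nsmul_eq_mul, ← mul_assoc]
      change (Ucount A B D n z' : ℝ) * _ * _ = _
      rw [Ucount_mul_chainLawUV]
      push_cast
      ring

theorem sum_chainLawUV_mul_kernelR (huv : u < v) (z' : Fin n → S) :
    (∑ z, chainLawUV π p A B D n u v z * kernelR A B D n z z') * ((v - u) * (p A D * p D B)) =
      (u + 1) * chainLawUV π p A B D n (u + 1) v z' * ∑ c ∈ univ.erase D, p A c * p c B := by
  have hvu : (v : ℝ) - u ≠ 0 := sub_ne_zero.2 (by exact_mod_cast huv.ne')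
  simp_rw [chainLawUV_mul_kernelR huv, ← sum_div]
  rw [← sum_chainLawUV_mul_card_update_eq]
  field_simp

end Pushforward

theorem kernel_maps_condLaw_general
    {𝔸 : Type*} [Fintype 𝔸]
    (p : (𝔸 × 𝔸) → (𝔸 × 𝔸) → ℝ)
    (π : (𝔸 × 𝔸) → ℝ)
    (A B D : 𝔸 × 𝔸)
    (q : ℝ) (hq : q = p A D * p D B / ∑ D' : 𝔸 × 𝔸, p A D' * p D' B)
    (hqpos : 0 < q)
    (n : ℕ) (u v : ℕ) (huv : u < v)
    (hpos : 0 < prOf (chainLaw π p n)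
      (fun z => Ucount A B D n z = u ∧ Vcount A B n z = v)) :
    ∀ z' : Fin n → 𝔸 × 𝔸,
      (∑ z, condLawUV π p A B D n u v z * kernelR A B D n z z')
        = condLawUV π p A B D n (u + 1) v z' := by
  have hd : p A D * p D B ≠ 0 := fun h => by simp [h] at hq; exact hqpos.ne' hq
  have hvu : (v : ℝ) - u ≠ 0 := sub_ne_zero.2 (by exact_mod_cast huv.ne')
  rw [prOf_chainLaw_eq_sum] at hpos
  set Z := ∑ w, chainLawUV π p A B D n u v w
  obtain ⟨s, hs⟩ : ∃ s, ∀ z', (∑ z, chainLawUV π p A B D n u v z * kernelR A B D n z z') *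
      ((v - u) * (p A D * p D B)) = (u + 1) * chainLawUV π p A B D n (u + 1) v z' * s :=
    ⟨_, sum_chainLawUV_mul_kernelR huv⟩
  simp_rw [condLawUV_eq_div]
  refine eq_div_sum_of_eq_const_mul (g := fun z' => ∑ z, chainLawUV π p A B D n u v z / Z *
      kernelR A B D n z z') ((u + 1) * s / ((v - u) * (p A D * p D B) * Z)) (fun z' => ?_) ?_
  · simp only [div_mul_eq_mul_div, ← sum_div]
    rw [div_eq_div_iff hpos.ne' (by positivity)]
    linear_combination Z * hs z'
  · rw [sum_comm]
    simp_rw [← mul_sum, sum_kernelR, mul_one, ← sum_div]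
    exact div_self hpos.ne'

/-- if `Z` has law `P_{(u,v)}` (the chain conditioned on `U = u`,
`V = v`) with `0 ≤ u < v`, then `𝓡(Z)` has law `P_{(u+1,v)}`; that is, the pushforward
of `P_{(u,v)}` through the kernel `𝓡` equals `P_{(u+1,v)}`. -/
theorem kernel_maps_condLaw
    {𝔸 : Type*} [Fintype 𝔸] [DecidableEq 𝔸]
    (p : (𝔸 × 𝔸) → (𝔸 × 𝔸) → ℝ)
    (hpnn : ∀ x y, 0 ≤ p x y) (hprow : ∀ x, ∑ y, p x y = 1)
    (π : (𝔸 × 𝔸) → ℝ) (hπnn : ∀ x, 0 ≤ π x) (hπsum : ∑ x, π x = 1)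
    (hstat : ∀ y, ∑ x, π x * p x y = π y)
    (haper : ∃ m : ℕ, ∀ x y, 0 < (Matrix.of p ^ m) x y)
    (A B D : 𝔸 × 𝔸)
    (hAB : 0 < π A * ∑ C : 𝔸 × 𝔸, p A C * p C B)
    (q : ℝ) (hq : q = p A D * p D B / ∑ D' : 𝔸 × 𝔸, p A D' * p D' B)
    (hqpos : 0 < q)
    (n : ℕ) (u v : ℕ) (huv : u < v)
    (hpos : 0 < prOf (chainLaw π p n)
      (fun z => Ucount A B D n z = u ∧ Vcount A B n z = v)) :
    ∀ z' : Fin n → 𝔸 × 𝔸,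
      (∑ z, condLawUV π p A B D n u v z * kernelR A B D n z z')
        = condLawUV π p A B D n (u + 1) v z' :=
  kernel_maps_condLaw_general p π A B D q hq hqpos n u v huv hpos
end
end

section
/- For every v with P(V = v) > 0, the conditional distribution of U given V = v is binomial B(v, q) with q := p_{𝐀𝐃} p_{𝐃𝐁} / Σ_{𝐃'∈𝔸×𝔸} p_{𝐀𝐃'} p_{𝐃'𝐁}; that is, P(U = u | V = v) = C(v,u) q^u (1−q)^{v−u} for u = 0, …, v. -/
open Finset

noncomputable section

/-!
Split a word `z` into its middle letters `g` (positions `3i+1` of the complete triplets) and the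
remaining letters `w`. The Markov weight of `z` is a factor depending on `w` alone times
`∏ i, p aᵢ (g i) * p (g i) bᵢ`, where `aᵢ, bᵢ` are the outer letters of triplet `i`. So given `w`
the middle letters are independent, and on each of the `V` triplets of type `(𝐀·𝐁)` the middle
letter is `𝐃` with probability `p 𝐀 𝐃 * p 𝐃 𝐁 / ∑ 𝐃', p 𝐀 𝐃' * p 𝐃' 𝐁 = q`. In generating-function
form: `∑ z, [V z = v] P z X ^ U z = (q X + 1 - q) ^ v * P(V = v)`, and the coefficient of `X ^ u`
is the claim.
-/

open Polynomial

section GeneratingFunction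
variable {R : Type*} [CommRing R]

theorem coeff_C_mul_X_add_C_pow (a b : R) (n k : ℕ) :
    ((C a * X + C b) ^ n).coeff k = n.choose k * a ^ k * b ^ (n - k) := by
  have hterm : ∀ m, (C a * X) ^ m * C b ^ (n - m) * (n.choose m : R[X])
      = C (n.choose m * a ^ m * b ^ (n - m)) * X ^ m := by
    intro m
    simp only [map_mul, map_pow, map_natCast]
    ring
  simp only [add_pow, finsetSum_coeff, hterm, coeff_C_mul_X_pow, Finset.sum_ite_eq, mem_range]
  split_ifs with hk
  · rfl
  · simp [Nat.choose_eq_zero_of_lt (not_lt.mp hk)]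

variable {ι S : Type*} [Fintype ι] [DecidableEq ι] [Fintype S]

theorem sum_C_prod_mul_X_pow_card_filter (φ : ι → S → R) (E : ι → S → Prop)
    [∀ i, DecidablePred (E i)] :
    ∑ g : ι → S, C (∏ i, φ i (g i)) * X ^ #{i | E i (g i)}
      = ∏ i, ∑ x, C (φ i x) * X ^ (if E i x then 1 else 0) := by
  rw [Fintype.prod_sum]
  refine Fintype.sum_congr _ _ fun g => ?_
  rw [prod_mul_distrib, map_prod, prod_pow_eq_pow_sum, card_filter]

theorem sum_C_prod_mul_X_pow_card_filter_eq_prod_mul (φ : ι → S → R) (E : ι → S → Prop)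
    [∀ i, DecidablePred (E i)] (r : ι → R)
    (hr : ∀ i, ∑ x, (if E i x then φ i x else 0) = r i * ∑ x, φ i x) :
    ∑ g : ι → S, C (∏ i, φ i (g i)) * X ^ #{i | E i (g i)}
      = (∏ i, (C (r i) * X + C (1 - r i))) * C (∑ g : ι → S, ∏ i, φ i (g i)) := by
  rw [sum_C_prod_mul_X_pow_card_filter, ← Fintype.prod_sum, map_prod, ← prod_mul_distrib]
  refine Fintype.prod_congr _ _ fun i => ?_
  have hsplit : ∀ x, C (φ i x) * X ^ (if E i x then 1 else 0)
      = C (if E i x then φ i x else 0) * X + C (if E i x then 0 else φ i x) := by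
    intro x
    split_ifs <;> simp
  have hcompl : ∑ x, (if E i x then 0 else φ i x) = (1 - r i) * ∑ x, φ i x := by
    rw [sub_mul, one_mul, ← hr i, eq_sub_iff_add_eq, ← sum_add_distrib]
    exact Fintype.sum_congr _ _ fun x => by split_ifs <;> simp
  simp only [hsplit, sum_add_distrib, ← sum_mul, ← map_sum, hr i, hcompl, map_mul]
  ring

theorem sum_C_prod_mul_X_pow_card_filter_eq_pow_mul (φ : ι → S → R) (E : ι → S → Prop)
    [∀ i, DecidablePred (E i)] (P : ι → Prop) [DecidablePred P] (q : R)
    (hE : ∀ i, ∑ x, (if E i x then φ i x else 0) = (if P i then q else 0) * ∑ x, φ i x) :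
    ∑ g : ι → S, C (∏ i, φ i (g i)) * X ^ #{i | E i (g i)}
      = (C q * X + C (1 - q)) ^ #{i | P i} * C (∑ g : ι → S, ∏ i, φ i (g i)) := by
  rw [sum_C_prod_mul_X_pow_card_filter_eq_prod_mul φ E _ hE, ← prod_const, prod_filter]
  congr 1
  exact Fintype.prod_congr _ _ fun i => by split_ifs <;> simp

end GeneratingFunction

section Triplets
variable {S : Type*} {n : ℕ}

def IsMid (n : ℕ) (j : Fin n) : Prop := j.1 % 3 = 1 ∧ j.1 < 3 * (n / 3)

instance : DecidablePred (IsMid n) := fun _ => inferInstanceAs (Decidable (_ ∧ _))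

theorem isMid_posM (i : Fin (n / 3)) : IsMid n (posM n i) := by
  simp only [IsMid, posM]
  omega

theorem not_isMid_posA (i : Fin (n / 3)) : ¬IsMid n (posA n i) := by
  simp only [IsMid, posA]
  omega

theorem not_isMid_posB (i : Fin (n / 3)) : ¬IsMid n (posB n i) := by
  simp only [IsMid, posB]
  omega

def midEquiv (n : ℕ) : Fin (n / 3) ≃ {j : Fin n // IsMid n j} where
  toFun i := ⟨posM n i, isMid_posM i⟩
  invFun j := ⟨j.1.1 / 3, by have := j.2.2; omega⟩
  left_inv i := by ext; simp only [posM]; omega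
  right_inv j := by ext; have := j.2.1; simp only [posM]; omega

def splitMid (S : Type*) (n : ℕ) :
    (Fin n → S) ≃ (Fin (n / 3) → S) × ({j : Fin n // ¬IsMid n j} → S) :=
  (Equiv.piEquivPiSubtypeProd (IsMid n) fun _ => S).trans
    ((Equiv.arrowCongr (midEquiv n).symm (Equiv.refl S)).prodCongr (Equiv.refl _))

theorem splitMid_symm_apply (g : Fin (n / 3) → S) (w : {j : Fin n // ¬IsMid n j} → S)
    (j : Fin n) :
    (splitMid S n).symm (g, w) j
      = if hj : IsMid n j then g ((midEquiv n).symm ⟨j, hj⟩) else w ⟨j, hj⟩ :=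
  rfl

theorem splitMid_symm_apply_posM (g : Fin (n / 3) → S) (w : {j : Fin n // ¬IsMid n j} → S)
    (i : Fin (n / 3)) : (splitMid S n).symm (g, w) (posM n i) = g i := by
  rw [splitMid_symm_apply, dif_pos (isMid_posM i)]
  exact congrArg g ((midEquiv n).symm_apply_apply i)

theorem splitMid_symm_apply_of_not_isMid (g : Fin (n / 3) → S)
    (w : {j : Fin n // ¬IsMid n j} → S) {j : Fin n} (hj : ¬IsMid n j) :
    (splitMid S n).symm (g, w) j = w ⟨j, hj⟩ := by
  rw [splitMid_symm_apply, dif_neg hj]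

def firstLetter (w : {j : Fin n // ¬IsMid n j} → S) (i : Fin (n / 3)) : S :=
  w ⟨posA n i, not_isMid_posA i⟩

def lastLetter (w : {j : Fin n // ¬IsMid n j} → S) (i : Fin (n / 3)) : S :=
  w ⟨posB n i, not_isMid_posB i⟩

variable [DecidableEq S] (g : Fin (n / 3) → S) (w : {j : Fin n // ¬IsMid n j} → S)

theorem Vcount_splitMid_symm (A B : S) :
    Vcount A B n ((splitMid S n).symm (g, w))
      = #{i | firstLetter w i = A ∧ lastLetter w i = B} := by
  unfold Vcount
  congr 1
  ext i
  simp only [mem_filter, splitMid_symm_apply_of_not_isMid g w (not_isMid_posA i),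
    splitMid_symm_apply_of_not_isMid g w (not_isMid_posB i)]
  rfl

theorem Ucount_splitMid_symm (A B D : S) :
    Ucount A B D n ((splitMid S n).symm (g, w))
      = #{i | (firstLetter w i = A ∧ lastLetter w i = B) ∧ g i = D} := by
  unfold Ucount
  congr 1
  ext i
  simp only [mem_filter, splitMid_symm_apply_of_not_isMid g w (not_isMid_posA i),
    splitMid_symm_apply_of_not_isMid g w (not_isMid_posB i), splitMid_symm_apply_posM, and_assoc]
  rfl

end Triplets

section ChainFactorization
variable {S : Type*} {n : ℕ}

def transWeight (p : S → S → ℝ) (z : Fin n → S) (t : Fin (n - 1)) : ℝ :=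
  p (z ⟨t.1, by have := t.isLt; omega⟩) (z ⟨t.1 + 1, by have := t.isLt; omega⟩)

/-- The transitions `3i → 3i+1` and `3i+1 → 3i+2` inside the complete triplets. -/
def IsInner (n : ℕ) (t : Fin (n - 1)) : Prop := t.1 % 3 ≠ 2 ∧ t.1 < 3 * (n / 3)

instance : DecidablePred (IsInner n) := fun _ => inferInstanceAs (Decidable (_ ∧ _))

def innerEquiv (n : ℕ) : Fin (n / 3) × Fin 2 ≃ {t : Fin (n - 1) // IsInner n t} where
  toFun ib := ⟨⟨3 * ib.1.1 + ib.2.1, by have := ib.1.isLt; have := ib.2.isLt; omega⟩, by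
    have := ib.1.isLt; have := ib.2.isLt; constructor <;> dsimp only <;> omega⟩
  invFun t := (⟨t.1.1 / 3, by have := t.2.2; omega⟩, ⟨t.1.1 % 3, by have := t.2.1; omega⟩)
  left_inv ib := by
    have := ib.2.isLt
    ext <;> dsimp only <;> omega
  right_inv t := by ext; dsimp only; omega

def restWeight (π : S → ℝ) (p : S → S → ℝ) (n : ℕ) (z : Fin n → S) : ℝ :=
  (if hn : 0 < n then π (z ⟨0, hn⟩) else 1) * ∏ t : {t // ¬IsInner n t}, transWeight p z t

theorem chainLaw_eq_restWeight_mul (π : S → ℝ) (p : S → S → ℝ) (z : Fin n → S) :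
    chainLaw π p n z = restWeight π p n z *
      ∏ i, p (z (posA n i)) (z (posM n i)) * p (z (posM n i)) (z (posB n i)) := by
  have hinner : ∏ t : {t // IsInner n t}, transWeight p z t
      = ∏ i, p (z (posA n i)) (z (posM n i)) * p (z (posM n i)) (z (posB n i)) := by
    rw [← (innerEquiv n).prod_comp, Fintype.prod_prod_type]
    exact Fintype.prod_congr _ _ fun i => by rw [Fin.prod_univ_two]; rfl
  rw [restWeight, mul_assoc, ← hinner, mul_comm (∏ t : {t // ¬IsInner n t}, _),
    Fintype.prod_subtype_mul_prod_subtype, chainLaw]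
  split_ifs with hn
  · rfl
  · obtain rfl : n = 0 := by omega
    simp

theorem restWeight_congr (π : S → ℝ) (p : S → S → ℝ) {z z' : Fin n → S}
    (h : ∀ j, ¬IsMid n j → z j = z' j) : restWeight π p n z = restWeight π p n z' := by
  unfold restWeight transWeight
  congr 1
  · split_ifs with hn
    · exact congrArg π (h _ (by simp [IsMid]))
    · rfl
  · refine Fintype.prod_congr _ _ fun t => ?_
    have := t.2
    simp only [IsInner] at this
    rw [h _ (by simp only [IsMid]; omega), h _ (by simp only [IsMid]; omega)]

theorem exists_chainLaw_splitMid_symm_eq_mul_prod (π : S → ℝ) (p : S → S → ℝ)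
    (w : {j : Fin n // ¬IsMid n j} → S) :
    ∃ F, ∀ g, chainLaw π p n ((splitMid S n).symm (g, w))
      = F * ∏ i, p (firstLetter w i) (g i) * p (g i) (lastLetter w i) := by
  rcases isEmpty_or_nonempty (Fin (n / 3) → S) with hg | ⟨⟨g₀⟩⟩
  · exact ⟨0, fun g => isEmptyElim g⟩
  refine ⟨restWeight π p n ((splitMid S n).symm (g₀, w)), fun g => ?_⟩
  rw [chainLaw_eq_restWeight_mul,
    restWeight_congr π p (z' := (splitMid S n).symm (g₀, w)) fun j hj => by
      rw [splitMid_symm_apply_of_not_isMid _ _ hj, splitMid_symm_apply_of_not_isMid _ _ hj]]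
  simp only [splitMid_symm_apply_posM, splitMid_symm_apply_of_not_isMid g w (not_isMid_posA _),
    splitMid_symm_apply_of_not_isMid g w (not_isMid_posB _)]
  rfl

variable [Fintype S] [DecidableEq S]

theorem sum_C_chainLaw_mul_X_pow_Ucount_splitMid_symm (π : S → ℝ) (p : S → S → ℝ) (A B D : S)
    (q : ℝ) (hq : p A D * p D B = q * ∑ x, p A x * p x B) (w : {j : Fin n // ¬IsMid n j} → S) :
    ∑ g, C (chainLaw π p n ((splitMid S n).symm (g, w)))
        * X ^ Ucount A B D n ((splitMid S n).symm (g, w))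
      = (C q * X + C (1 - q)) ^ #{i | firstLetter w i = A ∧ lastLetter w i = B}
        * C (∑ g, chainLaw π p n ((splitMid S n).symm (g, w))) := by
  obtain ⟨F, hF⟩ := exists_chainLaw_splitMid_symm_eq_mul_prod π p w
  simp only [hF, Ucount_splitMid_symm, map_mul, mul_assoc, ← mul_sum]
  rw [sum_C_prod_mul_X_pow_card_filter_eq_pow_mul
    (fun i x => p (firstLetter w i) x * p x (lastLetter w i))
    (fun i x => (firstLetter w i = A ∧ lastLetter w i = B) ∧ x = D)
    (fun i => firstLetter w i = A ∧ lastLetter w i = B) q fun i => ?_]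
  · ring
  split_ifs with hi
  · simp only [hi, true_and, sum_ite_eq', mem_univ, if_true]
    exact hq
  · simp [hi]

theorem sum_ite_Vcount_C_chainLaw_mul_X_pow_Ucount (π : S → ℝ) (p : S → S → ℝ) (A B D : S)
    (q : ℝ) (hq : p A D * p D B = q * ∑ x, p A x * p x B) (v : ℕ) :
    ∑ z, (if Vcount A B n z = v then C (chainLaw π p n z) * X ^ Ucount A B D n z else 0)
      = (C q * X + C (1 - q)) ^ v * C (prOf (chainLaw π p n) fun z => Vcount A B n z = v) := by
  rw [prOf, map_sum, mul_sum, ← (splitMid S n).symm.sum_comp, ← (splitMid S n).symm.sum_comp,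
    Fintype.sum_prod_type, Fintype.sum_prod_type, sum_comm, sum_comm (γ := Fin (n / 3) → S)]
  refine Fintype.sum_congr _ _ fun w => ?_
  by_cases hv : #{i | firstLetter w i = A ∧ lastLetter w i = B} = v
  · simp only [Vcount_splitMid_symm, hv, if_true]
    rw [sum_C_chainLaw_mul_X_pow_Ucount_splitMid_symm π p A B D q hq, hv, map_sum, mul_sum]
  · simp [Vcount_splitMid_symm, hv]

end ChainFactorization

theorem prOf_Ucount_eq_and_Vcount_eq {S : Type*} [Fintype S] [DecidableEq S] (π : S → ℝ)
    (p : S → S → ℝ) (A B D : S) (q : ℝ) (hq : p A D * p D B = q * ∑ x, p A x * p x B)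
    (n u v : ℕ) :
    prOf (chainLaw π p n) (fun z => Ucount A B D n z = u ∧ Vcount A B n z = v)
      = v.choose u * q ^ u * (1 - q) ^ (v - u)
        * prOf (chainLaw π p n) (fun z => Vcount A B n z = v) := by
  have h := congrArg (coeff · u)
    (sum_ite_Vcount_C_chainLaw_mul_X_pow_Ucount (n := n) π p A B D q hq v)
  simp only [finsetSum_coeff, coeff_mul_C, coeff_C_mul_X_add_C_pow] at h
  rw [← h, prOf]
  refine Fintype.sum_congr _ _ fun z => ?_
  by_cases hV : Vcount A B n z = v <;> simp [hV, eq_comm (a := u)]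

theorem U_given_V_binomial_general
    {𝔸 : Type*} [Fintype 𝔸]
    (p : (𝔸 × 𝔸) → (𝔸 × 𝔸) → ℝ)
    (π : (𝔸 × 𝔸) → ℝ)
    (A B D : 𝔸 × 𝔸)
    (q : ℝ) (hq : q = p A D * p D B / ∑ D' : 𝔸 × 𝔸, p A D' * p D' B)
    (hqpos : 0 < q)
    (n : ℕ) (v : ℕ)
    (hv : 0 < prOf (chainLaw π p n) (fun z => Vcount A B n z = v)) :
    ∀ u : ℕ, u ≤ v →
      prOf (chainLaw π p n) (fun z => Ucount A B D n z = u ∧ Vcount A B n z = v) /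
          prOf (chainLaw π p n) (fun z => Vcount A B n z = v)
        = (v.choose u : ℝ) * q ^ u * (1 - q) ^ (v - u) := by
  classical
  intro u _
  have hs : ∑ D' : 𝔸 × 𝔸, p A D' * p D' B ≠ 0 := by
    rintro hs
    rw [hs, div_zero] at hq
    exact hqpos.ne' hq
  have hmass : p A D * p D B = q * ∑ x, p A x * p x B := by
    rw [hq, div_mul_cancel₀ _ hs]
  rw [prOf_Ucount_eq_and_Vcount_eq π p A B D q hmass, mul_div_assoc, div_self hv.ne', mul_one]

/-- for every `v` with `P(V = v) > 0`, the conditional distribution of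
`U` given `V = v` is binomial `B(v, q)` with
`q = p 𝐀 𝐃 * p 𝐃 𝐁 / Σ_{𝐃'} p 𝐀 𝐃' * p 𝐃' 𝐁`:
`P(U = u | V = v) = C(v,u) q^u (1-q)^{v-u}` for all `u ≤ v`. -/
theorem U_given_V_binomial
    {𝔸 : Type*} [Fintype 𝔸] [DecidableEq 𝔸]
    (p : (𝔸 × 𝔸) → (𝔸 × 𝔸) → ℝ)
    (hpnn : ∀ x y, 0 ≤ p x y) (hprow : ∀ x, ∑ y, p x y = 1)
    (π : (𝔸 × 𝔸) → ℝ) (hπnn : ∀ x, 0 ≤ π x) (hπsum : ∑ x, π x = 1)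
    (hstat : ∀ y, ∑ x, π x * p x y = π y)
    (haper : ∃ m : ℕ, ∀ x y, 0 < (Matrix.of p ^ m) x y)
    (A B D : 𝔸 × 𝔸)
    (hAB : 0 < π A * ∑ C : 𝔸 × 𝔸, p A C * p C B)
    (q : ℝ) (hq : q = p A D * p D B / ∑ D' : 𝔸 × 𝔸, p A D' * p D' B)
    (hqpos : 0 < q)
    (n : ℕ) (v : ℕ)
    (hv : 0 < prOf (chainLaw π p n) (fun z => Vcount A B n z = v)) :
    ∀ u : ℕ, u ≤ v →
      prOf (chainLaw π p n) (fun z => Ucount A B D n z = u ∧ Vcount A B n z = v) /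
          prOf (chainLaw π p n) (fun z => Vcount A B n z = v)
        = (v.choose u : ℝ) * q ^ u * (1 - q) ^ (v - u) :=
  U_given_V_binomial_general p π A B D q hq hqpos n v hv
end
end

section
/- Let v₁, v₂ be positive integers with v₁ ≤ v₂ and let q₁, q₂ ∈ (0,1). Define the integer intervals 𝒰₁ := [v₁q₁ − √v₁, v₁q₁ + √v₁] ∩ ℤ, 𝒰₂ := [v₂q₂ − √v₂, v₂q₂ + √v₂] ∩ ℤ, and 𝒰 := [(v₁q₁ + v₂q₂) − √v₁, (v₁q₁ + v₂q₂) + √v₁] ∩ ℤ. Then for every u ∈ 𝒰, the number of pairs (u₁, u₂) ∈ 𝒰₁ × 𝒰₂ with u₁ + u₂ = u is at least ⌊√v₁⌋ (that is, at least ⌊√v₁ ∧ √v₂⌋). -/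
/-!
A pair `(u₁, u - u₁)` is admissible exactly when `u₁` lies in both `[v₁q₁ - √v₁, v₁q₁ + √v₁]`
and `[u - v₂q₂ - √v₂, u - v₂q₂ + √v₂]`. The centres of these real intervals are at distance
at most `√v₁` and their radii satisfy `√v₁ ≤ √v₂`, so their intersection has length at least
`√v₁`; a closed real interval of length `ℓ` contains at least `⌊ℓ⌋` integers.
-/

open Finset

theorem Finset.card_filter_add_eq_card_filter_sub_mem {G : Type*} [AddCommGroup G]
    [DecidableEq G] (s t : Finset G) (u : G) :
    #((s ×ˢ t).filter fun w => w.1 + w.2 = u) = #(s.filter fun x => u - x ∈ t) := by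
  refine card_nbij' Prod.fst (fun x => (x, u - x)) ?_ ?_ ?_ ?_
  · rintro ⟨x, y⟩ hw
    simp only [coe_filter, mem_product, Set.mem_ofPred_eq] at hw ⊢
    obtain ⟨⟨hx, hy⟩, rfl⟩ := hw
    simpa using ⟨hx, hy⟩
  · intro x hx
    simpa using hx
  · rintro ⟨x, y⟩ hw
    simp only [coe_filter, Set.mem_ofPred_eq] at hw
    simp [← hw.2]
  · intro x _
    rfl

theorem Int.floor_sub_le_card_Icc_ceil_floor {α : Type*} [Ring α] [LinearOrder α]
    [IsStrictOrderedRing α] [FloorRing α] (x y : α) : ⌊y - x⌋ ≤ #(Icc ⌈x⌉ ⌊y⌋) := by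
  have : ⌊y - x⌋ < ⌊y⌋ + 1 - ⌈x⌉ + 1 := by
    rw [Int.floor_lt]
    push_cast
    calc y - x < (⌊y⌋ + 1) - (⌈x⌉ - 1) :=
          sub_lt_sub (Int.lt_floor_add_one y) (sub_lt_iff_lt_add.mpr (Int.ceil_lt_add_one x))
      _ = _ := by abel
  rw [Int.card_Icc]
  omega

theorem le_min_sub_max_of_abs_sub_le {α : Type*} [AddCommGroup α] [LinearOrder α]
    [IsOrderedAddMonoid α] {m c r s : α} (hc : |c - m| ≤ r) (hrs : r ≤ s) :
    r ≤ min (m + r) (c + s) - max (m - r) (c - s) := by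
  rw [abs_le] at hc
  grind

theorem card_pairs_sum_in_intervals_general
    (v₁ v₂ : ℕ) (hv : v₁ ≤ v₂) (q₁ q₂ : ℝ)
    (u : ℤ)
    (hu₁ : ((v₁ : ℝ) * q₁ + (v₂ : ℝ) * q₂) - Real.sqrt v₁ ≤ (u : ℝ))
    (hu₂ : (u : ℝ) ≤ ((v₁ : ℝ) * q₁ + (v₂ : ℝ) * q₂) + Real.sqrt v₁) :
    (⌊Real.sqrt v₁⌋ : ℤ) ≤
      (((Finset.Icc ⌈(v₁ : ℝ) * q₁ - Real.sqrt v₁⌉ ⌊(v₁ : ℝ) * q₁ + Real.sqrt v₁⌋ ×ˢ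
         Finset.Icc ⌈(v₂ : ℝ) * q₂ - Real.sqrt v₂⌉ ⌊(v₂ : ℝ) * q₂ + Real.sqrt v₂⌋).filter
          (fun w : ℤ × ℤ => w.1 + w.2 = u)).card : ℤ) := by
  set m₁ := (v₁ : ℝ) * q₁
  set m₂ := (v₂ : ℝ) * q₂
  set c := (u : ℝ) - m₂
  have hc : |c - m₁| ≤ √v₁ := abs_le.mpr ⟨by linarith, by linarith⟩
  have hsqrt : √v₁ ≤ √v₂ := Real.sqrt_le_sqrt (by exact_mod_cast hv)
  set x := max (m₁ - √v₁) (c - √v₂)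
  set y := min (m₁ + √v₁) (c + √v₂)
  have hsub : Icc ⌈x⌉ ⌊y⌋ ⊆ (Icc ⌈m₁ - √v₁⌉ ⌊m₁ + √v₁⌋).filter
      fun n => u - n ∈ Icc ⌈m₂ - √v₂⌉ ⌊m₂ + √v₂⌋ := by
    intro n hn
    rw [← Int.cast_mem_Icc_iff, Set.mem_Icc, max_le_iff, le_min_iff] at hn
    rw [mem_filter, ← Int.cast_mem_Icc_iff, ← Int.cast_mem_Icc_iff, Set.mem_Icc, Set.mem_Icc]
    push_cast
    refine ⟨⟨?_, ?_⟩, ?_, ?_⟩ <;> linarith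
  calc ⌊√v₁⌋ ≤ ⌊y - x⌋ := Int.floor_mono (le_min_sub_max_of_abs_sub_le hc hsqrt)
    _ ≤ #(Icc ⌈x⌉ ⌊y⌋) := Int.floor_sub_le_card_Icc_ceil_floor x y
    _ ≤ _ := by
      rw [card_filter_add_eq_card_filter_sub_mem]
      exact_mod_cast card_le_card hsub

/-- let `0 < v₁ ≤ v₂` and `q₁, q₂ ∈ (0,1)`, and consider the integer
intervals `𝒰₁ = [v₁q₁ - √v₁, v₁q₁ + √v₁] ∩ ℤ`, `𝒰₂ = [v₂q₂ - √v₂, v₂q₂ + √v₂] ∩ ℤ` and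
`𝒰 = [(v₁q₁ + v₂q₂) - √v₁, (v₁q₁ + v₂q₂) + √v₁] ∩ ℤ`. Then for every `u ∈ 𝒰` the number
of pairs `(u₁, u₂) ∈ 𝒰₁ × 𝒰₂` with `u₁ + u₂ = u` is at least `⌊√v₁⌋ = ⌊√v₁ ∧ √v₂⌋`. -/
theorem card_pairs_sum_in_intervals
    (v₁ v₂ : ℕ) (hv₁ : 0 < v₁) (hv : v₁ ≤ v₂) (q₁ q₂ : ℝ)
    (hq₁ : q₁ ∈ Set.Ioo (0 : ℝ) 1) (hq₂ : q₂ ∈ Set.Ioo (0 : ℝ) 1)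
    (u : ℤ)
    (hu₁ : ((v₁ : ℝ) * q₁ + (v₂ : ℝ) * q₂) - Real.sqrt v₁ ≤ (u : ℝ))
    (hu₂ : (u : ℝ) ≤ ((v₁ : ℝ) * q₁ + (v₂ : ℝ) * q₂) + Real.sqrt v₁) :
    (⌊Real.sqrt v₁⌋ : ℤ) ≤
      (((Finset.Icc ⌈(v₁ : ℝ) * q₁ - Real.sqrt v₁⌉ ⌊(v₁ : ℝ) * q₁ + Real.sqrt v₁⌋ ×ˢ
         Finset.Icc ⌈(v₂ : ℝ) * q₂ - Real.sqrt v₂⌉ ⌊(v₂ : ℝ) * q₂ + Real.sqrt v₂⌋).filter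
          (fun w : ℤ × ℤ => w.1 + w.2 = u)).card : ℤ) :=
  card_pairs_sum_in_intervals_general v₁ v₂ hv q₁ q₂ u hu₁ hu₂
end
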